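/- arXiv:1309.4072 — 4 statements merged into one kernel-verified Lean document; each statement's English description precedes it below -/
import Mathlib

section
/- There exist constants c > 0 and C > 0 such that for all real numbers R and R₁ with R > R₁ ≥ 3 and every axis-parallel square Q ⊂ ℝ² of side length R₁, the number of lattice points (n₁, n₂) ∈ ℤ² satisfying n₁² + n₂² = R² and (n₁, n₂) ∈ Q is at most C · exp(c · log R₁ / log log R₁). -/
/-!
If `R² > 2 R₁⁶`, the square holds at most two of the lattice points: three of them would span a
triangle with sides at most `√2 R₁` and area at least `1/2`, contradicting the circumradius formula
`abc = 4R · area`. Otherwise `N = R²` is at most `R₁⁸`, and the points are among the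
representations `N = a² + b²`, of which there are at most `15 d(N)²`; the divisor bound
`d(N) ≤ exp(O(log N / log log N))`, proved by splitting the prime factors of `N` at `√(log N)`,
finishes the proof.

To count representations, write `(a, b) = g (a₀, b₀)` with `(a₀, b₀)` primitive of norm `M`, fix
`x` with `x² ≡ -1 (mod M)`, and label `(a, b)` by the divisors `g` and `gcd(M, a₀ - x b₀)` of `N`.
Two primitive representations with the same label satisfy `M ∣ 2 (a₀ b₁ - a₁ b₀)`, and at most 15
representations do so.
-/

open Real Finset

lemma one_lt_log_of_three_le {x : ℝ} (hx : 3 ≤ x) : 1 < log x := by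
  rw [lt_log_iff_exp_lt (by linarith)]
  exact exp_one_lt_d9.trans_le (by norm_num; linarith)

namespace Nat

lemma factorization_le_log_two {n p : ℕ} (hn : n ≠ 0) (hp : p.Prime) :
    n.factorization p ≤ Nat.log 2 n :=
  Nat.le_log_of_pow_le one_lt_two ((Nat.pow_le_pow_left hp.two_le _).trans (ordProj_le p hn))

lemma prod_factorization_succ_le_of_le (n T : ℕ) (hn : n ≠ 0) :
    ∏ p ∈ n.primeFactors with p ≤ T, (n.factorization p + 1) ≤ (Nat.log 2 n + 1) ^ T := by
  have hcard : #{p ∈ n.primeFactors | p ≤ T} ≤ T := by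
    calc #{p ∈ n.primeFactors | p ≤ T} ≤ #(Icc 1 T) := card_le_card fun p hp => by
          simp only [mem_filter, mem_primeFactors] at hp
          exact mem_Icc.2 ⟨hp.1.1.one_le, hp.2⟩
      _ = T := by simp
  calc ∏ p ∈ n.primeFactors with p ≤ T, (n.factorization p + 1)
      ≤ ∏ p ∈ n.primeFactors with p ≤ T, (Nat.log 2 n + 1) :=
        prod_le_prod' fun p hp => Nat.succ_le_succ <|
          factorization_le_log_two hn (prime_of_mem_primeFactors (mem_filter.1 hp).1)
    _ = (Nat.log 2 n + 1) ^ #{p ∈ n.primeFactors | p ≤ T} := prod_const _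
    _ ≤ (Nat.log 2 n + 1) ^ T := Nat.pow_le_pow_right (Nat.succ_pos _) hcard

lemma prod_factorization_succ_le_of_lt (n T : ℕ) (hn : n ≠ 0) (hT : T ≠ 0) :
    ∏ p ∈ n.primeFactors with ¬p ≤ T, (n.factorization p + 1) ≤ 2 ^ Nat.log (T + 1) n := by
  set B := {p ∈ n.primeFactors | ¬p ≤ T}
  have hpow : (T + 1) ^ ∑ p ∈ B, n.factorization p ≤ n :=
    calc (T + 1) ^ ∑ p ∈ B, n.factorization p
        = ∏ p ∈ B, (T + 1) ^ n.factorization p := (prod_pow_eq_pow_sum _ _ _).symm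
      _ ≤ ∏ p ∈ B, p ^ n.factorization p :=
        prod_le_prod' fun p hp => Nat.pow_le_pow_left (by simp [B] at hp; omega) _
      _ ≤ ∏ p ∈ n.primeFactors, p ^ n.factorization p :=
        prod_le_prod_of_subset_of_one_le' (filter_subset _ _) fun p hp _ =>
          Nat.one_le_pow _ _ (prime_of_mem_primeFactors hp).pos
      _ = n := by
        rw [prod_primeFactors_prod_factorization]; exact prod_factorization_pow_eq_self hn
  calc ∏ p ∈ B, (n.factorization p + 1) ≤ ∏ p ∈ B, 2 ^ n.factorization p :=
        prod_le_prod' fun p _ => Nat.lt_two_pow_self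
    _ = 2 ^ ∑ p ∈ B, n.factorization p := prod_pow_eq_pow_sum _ _ _
    _ ≤ 2 ^ Nat.log (T + 1) n :=
        Nat.pow_le_pow_right two_pos (le_log_of_pow_le (by omega) hpow)

theorem card_divisors_le_log_pow_mul_two_pow (n T : ℕ) (hn : n ≠ 0) (hT : T ≠ 0) :
    #n.divisors ≤ (Nat.log 2 n + 1) ^ T * 2 ^ Nat.log (T + 1) n := by
  rw [card_divisors hn, ← prod_filter_mul_prod_filter_not n.primeFactors (· ≤ T)]
  exact Nat.mul_le_mul (prod_factorization_succ_le_of_le n T hn)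
    (prod_factorization_succ_le_of_lt n T hn hT)

end Nat

lemma two_mul_sqrt_mul_log_mul_log_le {L : ℝ} (hL : 1 ≤ L) :
    2 * √L * log (3 * L) * log L ≤ 48 * L := by
  set Q := √(√L)
  have hQ : 1 ≤ Q := one_le_sqrt.2 (one_le_sqrt.2 hL)
  have hQ2 : Q ^ 2 = √L := sq_sqrt (sqrt_nonneg L)
  have hQ4 : L = Q ^ 4 := by rw [show Q ^ 4 = (Q ^ 2) ^ 2 by ring, hQ2, sq_sqrt (by linarith)]
  have hlogQ : log Q ≤ Q := (log_le_sub_one_of_pos (by linarith)).trans (by linarith)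
  have hlogL : log L ≤ 4 * Q := by rw [hQ4, log_pow]; push_cast; linarith
  have hlog3L : log (3 * L) ≤ 6 * Q := by
    have : log 3 ≤ 2 := by
      rw [log_le_iff_le_exp (by norm_num), show (2:ℝ) = 1 + 1 by norm_num, exp_add]
      nlinarith [exp_one_gt_d9]
    rw [log_mul (by norm_num) (by linarith)]
    linarith
  have hlogL₀ : 0 ≤ log L := log_nonneg hL
  have hlog3L₀ : 0 ≤ log (3 * L) := log_nonneg (by linarith)
  calc 2 * √L * log (3 * L) * log L ≤ 2 * Q ^ 2 * (6 * Q) * (4 * Q) := by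
        rw [← hQ2]; gcongr
    _ = 48 * L := by rw [hQ4]; ring

theorem card_divisors_le_exp {n : ℕ} (hn : 3 ≤ n) :
    (#n.divisors : ℝ) ≤ exp (50 * log n / log (log n)) := by
  set L := log n
  have hL : 1 < L := one_lt_log_of_three_le (by exact_mod_cast hn)
  have hℓ : 0 < log L := log_pos hL
  set T := ⌈√L⌉₊
  have hT₀ : T ≠ 0 := by simpa [T] using sqrt_pos.2 (by linarith)
  have hT : √L ≤ T ∧ (T : ℝ) ≤ 2 * √L :=
    ⟨Nat.le_ceil _,
      (Nat.ceil_lt_add_one (sqrt_nonneg L)).le.trans (by linarith [one_le_sqrt.2 hL.le])⟩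
  have hlog_two : (Nat.log 2 n + 1 : ℝ) ≤ 3 * L := by
    have h := natLog_le_logb n 2
    rw [logb, le_div_iff₀ (by positivity)] at h
    have := log_two_gt_d9
    push_cast at h
    nlinarith
  have hlog_succ_T : (Nat.log (T + 1) n : ℝ) ≤ 2 * L / log L := by
    have hlogT : log L / 2 ≤ log (T + 1) := by
      rw [← log_sqrt (by linarith)]
      exact log_le_log (by positivity) (by linarith)
    calc (Nat.log (T + 1) n : ℝ) ≤ L / log (T + 1) := by
          simpa [logb] using natLog_le_logb n (T + 1)
      _ ≤ L / (log L / 2) := by gcongr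
      _ = 2 * L / log L := by field_simp
  have hT_log : T * log (3 * L) ≤ 48 * L / log L := by
    rw [le_div_iff₀ hℓ]
    calc T * log (3 * L) * log L ≤ 2 * √L * log (3 * L) * log L := by
          gcongr
          · exact log_nonneg (by linarith)
          · exact hT.2
      _ ≤ 48 * L := two_mul_sqrt_mul_log_mul_log_le hL.le
  calc (#n.divisors : ℝ) ≤ (Nat.log 2 n + 1 : ℝ) ^ T * 2 ^ Nat.log (T + 1) n := by
        exact_mod_cast Nat.card_divisors_le_log_pow_mul_two_pow n T (by omega) hT₀
    _ ≤ (3 * L) ^ T * exp (Nat.log (T + 1) n) := by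
        gcongr
        rw [← exp_one_pow]
        gcongr
        linarith [add_one_le_exp 1]
    _ = exp (T * log (3 * L) + Nat.log (T + 1) n) := by
        rw [exp_add, ← exp_log (show 0 < 3 * L by linarith), ← exp_nat_mul, log_exp]
    _ ≤ exp (50 * L / log L) := by
        gcongr
        calc _ ≤ 48 * L / log L + 2 * L / log L := add_le_add hT_log hlog_succ_T
          _ = 50 * L / log L := by ring

lemma exists_dvd_sq_add_one_of_isCoprime {M a b : ℤ} (h : M = a ^ 2 + b ^ 2) (hab : IsCoprime a b) :
    ∃ x : ℤ, M ∣ x ^ 2 + 1 := by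
  obtain ⟨r, hr⟩ := ZMod.isSquare_neg_one_of_eq_sq_add_sq_of_isCoprime h hab
  refine ⟨(r.cast : ℤ), Int.natAbs_dvd.1 ((ZMod.intCast_zmod_eq_zero_iff_dvd _ _).1 ?_)⟩
  push_cast
  rw [sq, ← hr, neg_add_cancel]

lemma isCoprime_of_dvd_sq_add_one {M x : ℤ} (hx : M ∣ x ^ 2 + 1) : IsCoprime M x := by
  obtain ⟨k, hk⟩ := hx
  exact ⟨k, -x, by linear_combination -hk⟩

lemma div_gcd_sub_mul_dvd_add_mul {M x a b : ℤ} (hM : 0 < M) (hx : M ∣ x ^ 2 + 1)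
    (h : a ^ 2 + b ^ 2 = M) : M / Int.gcd M (a - x * b) ∣ a + x * b := by
  have hdvd : (a - x * b) * (a + x * b) ≡ (a - x * b) * 0 [ZMOD M] := by
    obtain ⟨k, hk⟩ := hx
    exact (Int.modEq_zero_iff_dvd.2 ⟨1 - k * b ^ 2, by linear_combination h - b ^ 2 * hk⟩).trans
      (by simp [Int.ModEq])
  exact Int.modEq_zero_iff_dvd.1 (Int.ModEq.cancel_left_div_gcd hM hdvd)

lemma dvd_sub_mul_mul_add_mul_of_gcd_eq {M x a b c d : ℤ} (hM : 0 < M) (hx : M ∣ x ^ 2 + 1)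
    (h : c ^ 2 + d ^ 2 = M) (hg : Int.gcd M (a - x * b) = Int.gcd M (c - x * d)) :
    M ∣ (a - x * b) * (c + x * d) := by
  rw [← Int.mul_ediv_cancel' (Int.gcd_dvd_left M (c - x * d))]
  exact mul_dvd_mul (hg ▸ Int.gcd_dvd_right ..) (div_gcd_sub_mul_dvd_add_mul hM hx h)

lemma dvd_two_mul_cross_of_gcd_eq {M x a₀ b₀ a₁ b₁ : ℤ} (hM : 0 < M) (hx : M ∣ x ^ 2 + 1)
    (h₀ : a₀ ^ 2 + b₀ ^ 2 = M) (h₁ : a₁ ^ 2 + b₁ ^ 2 = M)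
    (hg : Int.gcd M (a₀ - x * b₀) = Int.gcd M (a₁ - x * b₁)) :
    M ∣ 2 * (a₀ * b₁ - a₁ * b₀) := by
  have h2x : M ∣ x * (2 * (a₀ * b₁ - a₁ * b₀)) := by
    have := dvd_sub (dvd_sub_mul_mul_add_mul_of_gcd_eq hM hx h₁ hg)
      (dvd_sub_mul_mul_add_mul_of_gcd_eq hM hx h₀ hg.symm)
    rwa [show (a₀ - x * b₀) * (a₁ + x * b₁) - (a₁ - x * b₁) * (a₀ + x * b₀) =
      x * (2 * (a₀ * b₁ - a₁ * b₀)) by ring] at this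
  exact (isCoprime_of_dvd_sq_add_one hx).dvd_of_dvd_mul_left h2x

lemma Int.eq_of_sq_eq_of_sign_eq {w w' : ℤ} (h : w ^ 2 = w' ^ 2) (hs : w.sign = w'.sign) :
    w = w' := by
  rw [← Int.sign_mul_natAbs w, ← Int.sign_mul_natAbs w', hs, Int.natAbs_eq_iff_sq_eq.2 h]

lemma eq_of_cross_eq_of_dot_eq {a₀ b₀ : ℤ} (h₀ : a₀ ^ 2 + b₀ ^ 2 ≠ 0) {p q : ℤ × ℤ}
    (hv : a₀ * p.2 - p.1 * b₀ = a₀ * q.2 - q.1 * b₀)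
    (hw : a₀ * p.1 + b₀ * p.2 = a₀ * q.1 + b₀ * q.2) :
    p = q :=
  Prod.ext (mul_left_cancel₀ h₀ (by linear_combination a₀ * hw - b₀ * hv))
    (mul_left_cancel₀ h₀ (by linear_combination b₀ * hw + a₀ * hv))

/-- Writing `v = a₀ b - a b₀` and `w = a₀ a + b₀ b`, we have `v² + w² = M²`, so `M ∣ 2 v` leaves
five values of `v`, each with `w` determined up to sign. -/
lemma card_le_fifteen_of_dvd_two_mul_cross {M a₀ b₀ : ℤ} (h₀ : a₀ ^ 2 + b₀ ^ 2 = M) (hM : M ≠ 0)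
    {F : Finset (ℤ × ℤ)} (hF : ∀ p ∈ F, p.1 ^ 2 + p.2 ^ 2 = M ∧ M ∣ 2 * (a₀ * p.2 - p.1 * b₀)) :
    #F ≤ 15 := by
  have hvw : ∀ p ∈ F, (a₀ * p.2 - p.1 * b₀) ^ 2 + (a₀ * p.1 + b₀ * p.2) ^ 2 = M ^ 2 :=
    fun p hp => by linear_combination (a₀ ^ 2 + b₀ ^ 2) * (hF p hp).1 + M * h₀
  let f : ℤ × ℤ → ℤ × ℤ := fun p => (2 * (a₀ * p.2 - p.1 * b₀) / M, (a₀ * p.1 + b₀ * p.2).sign)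
  have hf : ∀ p ∈ F, M * (f p).1 = 2 * (a₀ * p.2 - p.1 * b₀) := fun p hp =>
    Int.mul_ediv_cancel' (hF p hp).2
  have hmaps : Set.MapsTo f F ((Icc (-2) 2 ×ˢ Icc (-1) 1 : Finset (ℤ × ℤ)) : Set (ℤ × ℤ)) := by
    intro p hp
    have hk : (f p).1 ^ 2 ≤ 4 := by
      have hMk : (M * (f p).1) ^ 2 ≤ 4 * M ^ 2 := by
        rw [hf p hp]; nlinarith [hvw p hp, sq_nonneg (a₀ * p.1 + b₀ * p.2)]
      exact le_of_mul_le_mul_left (by linarith) (by positivity : 0 < M ^ 2)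
    simp only [coe_product, Set.mem_prod, coe_Icc, Set.mem_Icc]
    refine ⟨⟨by nlinarith, by nlinarith⟩, ?_⟩
    rcases Int.sign_trichotomy (a₀ * p.1 + b₀ * p.2) with h | h | h <;> simp [f, h]
  have hinj : Set.InjOn f F := by
    intro p hp q hq hpq
    have hv : a₀ * p.2 - p.1 * b₀ = a₀ * q.2 - q.1 * b₀ := by
      have := hf p hp; have := hf q hq; rw [hpq] at *; linarith
    refine eq_of_cross_eq_of_dot_eq (h₀ ▸ hM) hv
      (Int.eq_of_sq_eq_of_sign_eq ?_ (congrArg Prod.snd hpq))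
    linear_combination hvw p hp - hvw q hq - (a₀ * p.2 - p.1 * b₀ + (a₀ * q.2 - q.1 * b₀)) * hv
  exact (card_le_card_of_injOn f hmaps hinj).trans (by decide)

noncomputable def sumTwoSqReps (N : ℕ) : Finset (ℤ × ℤ) :=
  {p ∈ Icc (-(N : ℤ)) N ×ˢ Icc (-(N : ℤ)) N | p.1 ^ 2 + p.2 ^ 2 = N}

lemma mem_sumTwoSqReps {N : ℕ} {p : ℤ × ℤ} : p ∈ sumTwoSqReps N ↔ p.1 ^ 2 + p.2 ^ 2 = N := by
  refine ⟨fun hp => (mem_filter.1 hp).2, fun hp => mem_filter.2 ⟨?_, hp⟩⟩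
  have h₁ : |p.1| ≤ N :=
    Int.abs_eq_natAbs p.1 ▸ (Int.natAbs_le_self_sq _).trans (by nlinarith [sq_nonneg p.2])
  have h₂ : |p.2| ≤ N :=
    Int.abs_eq_natAbs p.2 ▸ (Int.natAbs_le_self_sq _).trans (by nlinarith [sq_nonneg p.1])
  exact mem_product.2 ⟨mem_Icc.2 (abs_le.1 h₁), mem_Icc.2 (abs_le.1 h₂)⟩

lemma ne_zero_of_mem_sumTwoSqReps {N : ℕ} (hN : N ≠ 0) {p : ℤ × ℤ} (hp : p ∈ sumTwoSqReps N) :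
    p ≠ 0 := by
  rintro rfl
  have := mem_sumTwoSqReps.1 hp
  simp at this; omega

lemma gcd_pos_of_ne_zero {p : ℤ × ℤ} (hp : p ≠ 0) : 0 < Int.gcd p.1 p.2 :=
  Int.gcd_pos_iff.2 <| by contrapose! hp; exact Prod.ext hp.1 hp.2

def primPart (p : ℤ × ℤ) : ℤ × ℤ := (p.1 / Int.gcd p.1 p.2, p.2 / Int.gcd p.1 p.2)

lemma gcd_smul_primPart (p : ℤ × ℤ) : (Int.gcd p.1 p.2 : ℤ) • primPart p = p := by
  ext <;> simp only [primPart, Prod.smul_fst, Prod.smul_snd, smul_eq_mul]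
  · exact Int.mul_ediv_cancel' (Int.gcd_dvd_left ..)
  · exact Int.mul_ediv_cancel' (Int.gcd_dvd_right ..)

lemma isCoprime_primPart {p : ℤ × ℤ} (hp : p ≠ 0) : IsCoprime (primPart p).1 (primPart p).2 :=
  Int.isCoprime_iff_gcd_eq_one.2 (Int.gcd_ediv_gcd_ediv_gcd (gcd_pos_of_ne_zero hp))

lemma sq_add_sq_primPart (p : ℤ × ℤ) :
    (Int.gcd p.1 p.2 : ℤ) ^ 2 * ((primPart p).1 ^ 2 + (primPart p).2 ^ 2) = p.1 ^ 2 + p.2 ^ 2 := by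
  conv_rhs => rw [← gcd_smul_primPart p]
  simp only [Prod.smul_fst, Prod.smul_snd, smul_eq_mul]
  ring

/-- Junk when `-1` is not a square modulo `M`. -/
noncomputable def sqrtNegOneMod (M : ℤ) : ℤ := Classical.epsilon fun x => M ∣ x ^ 2 + 1

/-- For primitive `(a, b)` with `a² + b² = M` and `x² ≡ -1 (mod M)`, the divisor `gcd(M, a - x b)`
of `M` plays the role of the ideal `gcd(M, a + b i)` of `ℤ[i]`. -/
noncomputable def repLabel (p : ℤ × ℤ) : ℕ × ℕ :=
  let M := (primPart p).1 ^ 2 + (primPart p).2 ^ 2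
  (Int.gcd p.1 p.2, Int.gcd M ((primPart p).1 - sqrtNegOneMod M * (primPart p).2))

lemma card_fiber_repLabel_le {N : ℕ} (hN : N ≠ 0) (y : ℕ × ℕ) :
    #{p ∈ sumTwoSqReps N | repLabel p = y} ≤ 15 := by
  set F := {p ∈ sumTwoSqReps N | repLabel p = y}
  obtain hF | ⟨q, hq⟩ := F.eq_empty_or_nonempty
  · simp [hF]
  have hq₀ := ne_zero_of_mem_sumTwoSqReps hN (mem_filter.1 hq).1
  have hlabel : ∀ p ∈ F, repLabel p = repLabel q := fun p hp =>
    (mem_filter.1 hp).2.trans (mem_filter.1 hq).2.symm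
  set M := (primPart q).1 ^ 2 + (primPart q).2 ^ 2 with hMdef
  have hgq : (0 : ℤ) < Int.gcd q.1 q.2 := by exact_mod_cast gcd_pos_of_ne_zero hq₀
  have hMq : (Int.gcd q.1 q.2 : ℤ) ^ 2 * M = N := by
    rw [hMdef, sq_add_sq_primPart, ← mem_sumTwoSqReps.1 (mem_filter.1 hq).1]
  have hM : 0 < M := by
    have : (0 : ℤ) < N := by omega
    nlinarith [sq_nonneg (Int.gcd q.1 q.2 : ℤ)]
  have hx : M ∣ sqrtNegOneMod M ^ 2 + 1 :=
    Classical.epsilon_spec (exists_dvd_sq_add_one_of_isCoprime rfl (isCoprime_primPart hq₀))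
  have hgcd : ∀ p ∈ F, Int.gcd p.1 p.2 = Int.gcd q.1 q.2 := fun p hp =>
    congrArg Prod.fst (hlabel p hp)
  have hnorm : ∀ p ∈ F, (primPart p).1 ^ 2 + (primPart p).2 ^ 2 = M := fun p hp => by
    refine mul_left_cancel₀ (pow_ne_zero 2 hgq.ne') ?_
    rw [hMq, ← hgcd p hp, sq_add_sq_primPart, ← mem_sumTwoSqReps.1 (mem_filter.1 hp).1]
  have hinj : Set.InjOn primPart F := fun p hp p' hp' h => by
    rw [← gcd_smul_primPart p, ← gcd_smul_primPart p', h, hgcd p hp, hgcd p' hp']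
  rw [← card_image_of_injOn hinj]
  refine card_le_fifteen_of_dvd_two_mul_cross rfl hM.ne' fun p' hp' => ?_
  obtain ⟨p, hp, rfl⟩ := mem_image.1 hp'
  refine ⟨hnorm p hp, dvd_two_mul_cross_of_gcd_eq hM hx rfl (hnorm p hp) ?_⟩
  have := congrArg Prod.snd (hlabel p hp)
  simp only [repLabel, hnorm p hp] at this
  exact this.symm

theorem card_sumTwoSqReps_le {N : ℕ} (hN : N ≠ 0) : #(sumTwoSqReps N) ≤ 15 * #N.divisors ^ 2 := by
  have hmaps : ∀ p ∈ sumTwoSqReps N, repLabel p ∈ N.divisors ×ˢ N.divisors := by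
    intro p hp
    have hNp := (sq_add_sq_primPart p).trans (mem_sumTwoSqReps.1 hp)
    simp only [repLabel, mem_product, Nat.mem_divisors, and_iff_left hN]
    constructor
    · exact Int.natCast_dvd_natCast.1 (hNp ▸ (dvd_pow_self _ two_ne_zero).mul_right _)
    · exact Int.natCast_dvd_natCast.1 ((Int.gcd_dvd_left ..).trans (hNp ▸ dvd_mul_left _ _))
  calc #(sumTwoSqReps N) ≤ 15 * #(N.divisors ×ˢ N.divisors) :=
        card_le_mul_card_image_of_maps_to hmaps 15 fun y _ => card_fiber_repLabel_le hN y
    _ = 15 * #N.divisors ^ 2 := by rw [card_product, sq]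

/-- The circumradius formula `abc = 4ρ · area`, squared, for a triangle inscribed in a circle
centred at the origin. -/
lemma circumradius_identity {R : Type*} [CommRing R] {p₁ p₂ q₁ q₂ r₁ r₂ : R}
    (hq : q₁ ^ 2 + q₂ ^ 2 = p₁ ^ 2 + p₂ ^ 2) (hr : r₁ ^ 2 + r₂ ^ 2 = p₁ ^ 2 + p₂ ^ 2) :
    ((q₁ - p₁) ^ 2 + (q₂ - p₂) ^ 2) * ((r₁ - p₁) ^ 2 + (r₂ - p₂) ^ 2) *
        ((r₁ - q₁) ^ 2 + (r₂ - q₂) ^ 2) =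
      4 * (p₁ ^ 2 + p₂ ^ 2) * ((q₁ - p₁) * (r₂ - p₂) - (q₂ - p₂) * (r₁ - p₁)) ^ 2 := by
  set u₁ := q₁ - p₁; set u₂ := q₂ - p₂; set w₁ := r₁ - p₁; set w₂ := r₂ - p₂
  set D := u₁ * w₂ - u₂ * w₁
  have hu : 2 * (p₁ * u₁ + p₂ * u₂) + (u₁ ^ 2 + u₂ ^ 2) = 0 := by linear_combination hq
  have hw : 2 * (p₁ * w₁ + p₂ * w₂) + (w₁ ^ 2 + w₂ ^ 2) = 0 := by linear_combination hr
  -- Cramer's rule for the linear system `hu`, `hw` in `(p₁, p₂)`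
  have h₁ : 2 * D * p₁ = u₂ * (w₁ ^ 2 + w₂ ^ 2) - w₂ * (u₁ ^ 2 + u₂ ^ 2) := by
    linear_combination w₂ * hu - u₂ * hw
  have h₂ : 2 * D * p₂ = w₁ * (u₁ ^ 2 + u₂ ^ 2) - u₁ * (w₁ ^ 2 + w₂ ^ 2) := by
    linear_combination u₁ * hw - w₁ * hu
  have hr₁ : r₁ - q₁ = w₁ - u₁ := by ring
  have hr₂ : r₂ - q₂ = w₂ - u₂ := by ring
  rw [hr₁, hr₂]
  linear_combination (-(2 * D * p₁ + (u₂ * (w₁ ^ 2 + w₂ ^ 2) - w₂ * (u₁ ^ 2 + u₂ ^ 2)))) * h₁ -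
    (2 * D * p₂ + (w₁ * (u₁ ^ 2 + u₂ ^ 2) - u₁ * (w₁ ^ 2 + w₂ ^ 2))) * h₂

def sqDist (p q : ℤ × ℤ) : ℤ := (q.1 - p.1) ^ 2 + (q.2 - p.2) ^ 2

lemma sqDist_pos {p q : ℤ × ℤ} (h : p ≠ q) : 0 < sqDist p q := by
  unfold sqDist
  rcases not_and_or.1 (mt Prod.ext_iff.2 h) with h | h <;>
    · have := sq_pos_of_ne_zero (sub_ne_zero.2 (Ne.symm h)); positivity

/-- The doubled area of a triangle with distinct lattice vertices on a circle is a nonzero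
integer. -/
lemma four_mul_le_sqDist_mul {N : ℤ} {p q r : ℤ × ℤ} (hpq : p ≠ q) (hpr : p ≠ r) (hqr : q ≠ r)
    (hp : p.1 ^ 2 + p.2 ^ 2 = N) (hq : q.1 ^ 2 + q.2 ^ 2 = N) (hr : r.1 ^ 2 + r.2 ^ 2 = N) :
    4 * N ≤ sqDist p q * sqDist p r * sqDist q r := by
  have hid : sqDist p q * sqDist p r * sqDist q r =
      4 * N * ((q.1 - p.1) * (r.2 - p.2) - (q.2 - p.2) * (r.1 - p.1)) ^ 2 :=
    hp ▸ circumradius_identity (hq.trans hp.symm) (hr.trans hp.symm)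
  have hpos := mul_pos (mul_pos (sqDist_pos hpq) (sqDist_pos hpr)) (sqDist_pos hqr)
  have hD : (q.1 - p.1) * (r.2 - p.2) - (q.2 - p.2) * (r.1 - p.1) ≠ 0 := fun hD => by
    simp [hid, hD] at hpos
  have hD₁ := sq_pos_of_ne_zero hD
  have hN : 0 ≤ N := hp ▸ by positivity
  rw [hid]
  nlinarith

def latticePointsOnCircleInBox (R R₁ a b : ℝ) : Set (ℤ × ℤ) :=
  {p | (p.1 : ℝ) ^ 2 + (p.2 : ℝ) ^ 2 = R ^ 2 ∧
    (p.1 : ℝ) ∈ Set.Icc a (a + R₁) ∧ (p.2 : ℝ) ∈ Set.Icc b (b + R₁)}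

lemma sq_sub_le_sq_of_mem_Icc {a R₁ x y : ℝ} (hx : x ∈ Set.Icc a (a + R₁))
    (hy : y ∈ Set.Icc a (a + R₁)) : (x - y) ^ 2 ≤ R₁ ^ 2 :=
  sq_le_sq' (by linarith [hx.1, hy.2]) (by linarith [hx.2, hy.1])

lemma sqDist_le_of_mem_latticePointsOnCircleInBox {R R₁ a b : ℝ} {p q : ℤ × ℤ}
    (hp : p ∈ latticePointsOnCircleInBox R R₁ a b) (hq : q ∈ latticePointsOnCircleInBox R R₁ a b) :
    (sqDist p q : ℝ) ≤ 2 * R₁ ^ 2 := by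
  push_cast [sqDist]
  linarith [sq_sub_le_sq_of_mem_Icc hq.2.1 hp.2.1, sq_sub_le_sq_of_mem_Icc hq.2.2 hp.2.2]

lemma ncard_latticePointsOnCircleInBox_le_two {R R₁ a b : ℝ} (h : 2 * R₁ ^ 6 < R ^ 2) :
    (latticePointsOnCircleInBox R R₁ a b).ncard ≤ 2 := by
  set S := latticePointsOnCircleInBox R R₁ a b
  rcases S.finite_or_infinite with hfin | hinf
  swap
  · simp [hinf.ncard]
  by_contra! h2
  obtain ⟨p, hp, q, hq, r, hr, hpq, hpr, hqr⟩ := (Set.two_lt_ncard hfin).1 h2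
  have hN : ∀ s ∈ S, s.1 ^ 2 + s.2 ^ 2 = p.1 ^ 2 + p.2 ^ 2 := fun s hs => by
    exact_mod_cast hs.1.trans hp.1.symm
  have hlow : 4 * R ^ 2 ≤ (sqDist p q * sqDist p r * sqDist q r : ℝ) := by
    rw [← hp.1]
    exact_mod_cast four_mul_le_sqDist_mul hpq hpr hqr rfl (hN q hq) (hN r hr)
  have hup : (sqDist p q * sqDist p r * sqDist q r : ℝ) ≤
      2 * R₁ ^ 2 * (2 * R₁ ^ 2) * (2 * R₁ ^ 2) := by
    have h₀ : ∀ {s t : ℤ × ℤ}, s ≠ t → (0 : ℝ) ≤ sqDist s t := fun h => by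
      exact_mod_cast (sqDist_pos h).le
    have hle := fun {s t} (hs : s ∈ S) (ht : t ∈ S) =>
      sqDist_le_of_mem_latticePointsOnCircleInBox hs ht
    exact mul_le_mul (mul_le_mul (hle hp hq) (hle hp hr) (h₀ hpr) (by positivity)) (hle hq hr)
      (h₀ hqr) (by positivity)
  nlinarith

lemma log_div_log_log_le_of_le_pow {x y : ℝ} (k : ℕ) (hx : 3 ≤ x) (hxy : x ≤ y) (hy : y ≤ x ^ k) :
    log y / log (log y) ≤ k * (log x / log (log x)) := by
  have hx₁ := one_lt_log_of_three_le hx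
  have hlog : log x ≤ log y := log_le_log (by linarith) hxy
  have hloglog : 0 < log (log x) := log_pos hx₁
  calc log y / log (log y) ≤ k * log x / log (log y) := by
        gcongr
        · exact log_nonneg (by linarith)
        · simpa using log_le_log (by linarith) hy
    _ ≤ k * log x / log (log x) := by
        gcongr
    _ = k * (log x / log (log x)) := mul_div_assoc _ _ _

lemma card_divisors_sq_le_exp {N : ℕ} {x : ℝ} (hx : 3 ≤ x) (hxN : x ≤ N) (hN : N ≤ x ^ 8) :
    (#N.divisors : ℝ) ^ 2 ≤ exp (800 * log x / log (log x)) := by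
  calc (#N.divisors : ℝ) ^ 2 ≤ exp (50 * log N / log (log N)) ^ 2 :=
        pow_le_pow_left₀ (by positivity) (card_divisors_le_exp (by exact_mod_cast hx.trans hxN)) 2
    _ = exp (100 * (log N / log (log N))) := by rw [← exp_nat_mul]; ring_nf
    _ ≤ exp (800 * log x / log (log x)) := by
        have := log_div_log_log_le_of_le_pow 8 hx hxN hN
        push_cast at this
        rw [mul_div_assoc]
        exact exp_le_exp.2 (by linarith)

lemma latticePointsOnCircleInBox_subset {R R₁ a b : ℝ} {N : ℕ} (hN : (N : ℝ) = R ^ 2) :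
    latticePointsOnCircleInBox R R₁ a b ⊆ sumTwoSqReps N := fun p hp =>
  mem_sumTwoSqReps.2 (by exact_mod_cast hp.1.trans hN.symm)

/-- Lemma 2.1: lattice points on the circle of radius `R` lying in an axis-parallel
square of side length `R₁` number at most `C · exp(c · log R₁ / log log R₁)`. -/
theorem circle_lattice_points_in_box_bound :
    ∃ c > (0 : ℝ), ∃ C > (0 : ℝ), ∀ R R₁ : ℝ, R > R₁ → R₁ ≥ 3 → ∀ a b : ℝ,
      (({p : ℤ × ℤ | (p.1 : ℝ) ^ 2 + (p.2 : ℝ) ^ 2 = R ^ 2 ∧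
          (p.1 : ℝ) ∈ Set.Icc a (a + R₁) ∧ (p.2 : ℝ) ∈ Set.Icc b (b + R₁)}).ncard : ℝ)
        ≤ C * Real.exp (c * Real.log R₁ / Real.log (Real.log R₁)) := by
  refine ⟨800, by norm_num, 15, by norm_num, fun R R₁ hR hR₁ a b => ?_⟩
  change ((latticePointsOnCircleInBox R R₁ a b).ncard : ℝ) ≤ _
  have hexp : 1 ≤ exp (800 * log R₁ / log (log R₁)) :=
    one_le_exp (div_nonneg (by linarith [one_lt_log_of_three_le hR₁])
      (log_nonneg (one_lt_log_of_three_le hR₁).le))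
  rcases lt_or_ge (2 * R₁ ^ 6) (R ^ 2) with hfar | hnear
  · calc _ ≤ (2 : ℝ) := by exact_mod_cast ncard_latticePointsOnCircleInBox_le_two hfar
      _ ≤ _ := by linarith
  obtain hS | ⟨p, hp⟩ := (latticePointsOnCircleInBox R R₁ a b).eq_empty_or_nonempty
  · rw [hS, Set.ncard_empty, Nat.cast_zero]; positivity
  obtain ⟨N, hN⟩ : ∃ N : ℕ, (N : ℝ) = R ^ 2 :=
    ⟨(p.1 ^ 2 + p.2 ^ 2).toNat, by rw [← hp.1]; exact_mod_cast Int.toNat_of_nonneg (by positivity)⟩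
  calc ((latticePointsOnCircleInBox R R₁ a b).ncard : ℝ) ≤ #(sumTwoSqReps N) := by
        exact_mod_cast (Set.ncard_le_ncard (latticePointsOnCircleInBox_subset hN)).trans_eq
          (Set.ncard_coe_finset _)
    _ ≤ 15 * (#N.divisors : ℝ) ^ 2 := by
        exact_mod_cast card_sumTwoSqReps_le (by rintro rfl; norm_num at hN; nlinarith)
    _ ≤ 15 * exp (800 * log R₁ / log (log R₁)) := by
        gcongr
        have hR₁8 : 2 * R₁ ^ 6 ≤ R₁ ^ 8 := by
          rw [show R₁ ^ 8 = R₁ ^ 6 * R₁ ^ 2 by ring, mul_comm]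
          exact mul_le_mul_of_nonneg_left (by nlinarith) (by positivity)
        exact card_divisors_sq_le_exp hR₁ (by nlinarith) (by linarith)
end

section
/- Let C₁ > 0 and let (z_n)_{n≥1} be a sequence of real numbers satisfying |z_n − π(n − 1/4)| ≤ C₁/n for all n ≥ 1. Then for every ε > 0 there exists a constant C_ε > 0 (depending only on ε and C₁) such that for every interval I ⊂ ℝ of length L ≥ 2 and every ℓ ∈ ℝ, the number of pairs (n, n') of positive integers with z_n ∈ I, z_{n'} ∈ I and |z_n² + z_{n'}² − ℓ| < 1 is at most C_ε · L^ε. -/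
/-!
Put `x_n = 4n - 1`, so that `z_n = (π / 4) x_n + O(1 / n)` and `z_n² = (π² / 16) x_n² + O(1)`.
A counted pair `(n, n')` gives the lattice point `(x_n, x_{n'})`; these points lie in a square of
side `W = O(L)` and their squared norms lie in an interval of length `O(1)`. It remains to bound
the lattice points on one circle `x² + y² = m` inside such a square:
* if `m ≤ 2 W⁶`, by the number `r(m) ≤ 2 d(m)³ ≪ m^δ ≪ L^ε` of all representations of `m`:
  dividing a representation by its gcd `g` gives a primitive one of `m / g²`, and primitive
  representations of `k` inject through `x / y` into the square roots of `-1` modulo `k`, of which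
  there are at most `2 d(k)²`;
* if `m > 2 W⁶`, by `2` (Jarník): three lattice points on the circle span a triangle of area
  `≥ 1 / 2`, so `abc = 4 √m · area` gives `4 m ≤ a²b²c² ≤ 8 W⁶`.
-/

open Real Finset

theorem add_one_le_mul_rpow_pow {δ : ℝ} (hδ : 0 < δ) {p : ℕ} (hp : 2 ≤ p) (e : ℕ) :
    (e + 1 : ℝ) ≤ (1 + 1 / (δ * log 2)) * ((p : ℝ) ^ e) ^ δ := by
  have hlog : 0 < δ * log 2 := mul_pos hδ (log_pos one_lt_two)
  have h2e : 1 + δ * log 2 * e ≤ ((p : ℝ) ^ e) ^ δ :=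
    calc 1 + δ * log 2 * e ≤ exp (δ * log 2 * e) := by linarith [add_one_le_exp (δ * log 2 * e)]
      _ = ((2 : ℝ) ^ e) ^ δ := by
        rw [← rpow_natCast, ← rpow_mul zero_le_two, rpow_def_of_pos two_pos]; ring_nf
      _ ≤ ((p : ℝ) ^ e) ^ δ := by gcongr; exact_mod_cast hp
  calc (e + 1 : ℝ) ≤ (e + 1) + (δ * log 2 * e + 1 / (δ * log 2)) :=
        le_add_of_nonneg_right (by positivity)
    _ = (1 + 1 / (δ * log 2)) * (1 + δ * log 2 * e) := by field_simp; ring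
    _ ≤ _ := by gcongr

theorem add_one_le_rpow_pow {δ : ℝ} (hδ : 0 < δ) {p : ℕ} (hp : (2 : ℝ) ^ (1 / δ) ≤ p) (e : ℕ) :
    (e + 1 : ℝ) ≤ ((p : ℝ) ^ e) ^ δ := by
  have hpδ : 2 ≤ (p : ℝ) ^ δ :=
    calc (2 : ℝ) = ((2 : ℝ) ^ (1 / δ)) ^ δ := by
          rw [← rpow_mul zero_le_two, one_div_mul_cancel hδ.ne', rpow_one]
      _ ≤ (p : ℝ) ^ δ := by gcongr
  calc (e + 1 : ℝ) ≤ 2 ^ e := by exact_mod_cast Nat.lt_two_pow_self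
    _ ≤ ((p : ℝ) ^ δ) ^ e := by gcongr
    _ = ((p : ℝ) ^ e) ^ δ := by
        rw [← rpow_natCast, ← rpow_natCast, ← rpow_mul, ← rpow_mul, mul_comm] <;> positivity

theorem card_divisors_le_mul_rpow {δ : ℝ} (hδ : 0 < δ) :
    ∃ C > 0, ∀ m : ℕ, m ≠ 0 → (#m.divisors : ℝ) ≤ C * (m : ℝ) ^ δ := by
  set c := 1 + 1 / (δ * log 2)
  have hc : 1 ≤ c := le_add_of_nonneg_right (by have := log_pos one_lt_two; positivity)
  set T := ⌈(2 : ℝ) ^ (1 / δ)⌉₊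
  refine ⟨c ^ T, by positivity, fun m hm => ?_⟩
  set w : ℕ → ℝ := fun p => if p < T then c else 1
  have hfactor : ∀ p ∈ m.primeFactors,
      (m.factorization p + 1 : ℝ) ≤ w p * ((p : ℝ) ^ m.factorization p) ^ δ := by
    intro p hp
    by_cases hpT : p < T
    · simp only [w, if_pos hpT]
      exact add_one_le_mul_rpow_pow hδ (Nat.prime_of_mem_primeFactors hp).two_le _
    · simp only [w, if_neg hpT, one_mul]
      exact add_one_le_rpow_pow hδ (Nat.ceil_le.mp (not_lt.mp hpT)) _
  have hw : ∏ p ∈ m.primeFactors, w p ≤ c ^ T :=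
    calc ∏ p ∈ m.primeFactors, w p = c ^ #{p ∈ m.primeFactors | p < T} := by
          simp [w, prod_ite]
      _ ≤ c ^ T := by
          refine pow_le_pow_right₀ hc ((card_le_card fun p hp => ?_).trans (card_range T).le)
          simpa using (mem_filter.mp hp).2
  have hprod : ∏ p ∈ m.primeFactors, ((p : ℝ) ^ m.factorization p) = m := by
    exact_mod_cast Nat.prod_factorization_pow_eq_self hm
  calc (#m.divisors : ℝ) = ∏ p ∈ m.primeFactors, (m.factorization p + 1 : ℝ) := by
        rw [Nat.card_divisors hm]; push_cast; rfl
    _ ≤ ∏ p ∈ m.primeFactors, (w p * ((p : ℝ) ^ m.factorization p) ^ δ) :=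
        prod_le_prod (fun _ _ => by positivity) hfactor
    _ = (∏ p ∈ m.primeFactors, w p) * (m : ℝ) ^ δ := by
        rw [prod_mul_distrib, finsetProd_rpow _ _ (fun _ _ => by positivity), hprod]
    _ ≤ c ^ T * (m : ℝ) ^ δ := by gcongr

theorem card_sq_eq_neg_one_le_card_sq_eq_one {R : Type*} [CommRing R] [Fintype R] [DecidableEq R] :
    #{x : R | x ^ 2 = -1} ≤ #{x : R | x ^ 2 = 1} := by
  obtain h | ⟨i, hi⟩ := eq_empty_or_nonempty {x : R | x ^ 2 = -1}
  · simp [h]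
  rw [mem_filter] at hi
  have hunit : IsUnit i := IsUnit.of_mul_eq_one (-i) (by linear_combination -hi.2)
  refine card_le_card_of_injOn (· * i) (fun x hx => ?_) hunit.mul_left_injective.injOn
  simp only [coe_filter, mem_univ, true_and, Set.mem_ofPred_eq] at hx ⊢
  linear_combination i ^ 2 * hx - hi.2

theorem le_two_mul_lcm_gcd_sub_one_gcd_add_one {k v : ℤ} (hk : k ∣ (v - 1) * (v + 1)) :
    k.natAbs ≤ 2 * (k.gcd (v - 1)).lcm (k.gcd (v + 1)) := by
  set a := k.gcd (v - 1)
  set b := k.gcd (v + 1)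
  have hab : k.natAbs ∣ a * b := by
    simpa [Int.natAbs_mul] using Int.natAbs_dvd_natAbs.mpr (Int.dvd_gcd_mul_gcd_iff_dvd_mul.mpr hk)
  have hgcd : a.gcd b ∣ 2 := by
    have h1 : ((a.gcd b : ℕ) : ℤ) ∣ v - 1 :=
      (Int.natCast_dvd_natCast.mpr (Nat.gcd_dvd_left a b)).trans (Int.gcd_dvd_right _ _)
    have h2 : ((a.gcd b : ℕ) : ℤ) ∣ v + 1 :=
      (Int.natCast_dvd_natCast.mpr (Nat.gcd_dvd_right a b)).trans (Int.gcd_dvd_right _ _)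
    exact_mod_cast (show (v + 1) - (v - 1) = 2 by ring) ▸ dvd_sub h2 h1
  rcases Nat.eq_zero_or_pos (a * b) with h0 | hpos
  · have hk0 : k = 0 := by
      rcases Nat.mul_eq_zero.mp h0 with h | h <;> exact (Int.gcd_eq_zero_iff.mp h).1
    simp [hk0]
  calc k.natAbs ≤ a * b := Nat.le_of_dvd hpos hab
    _ = a.gcd b * a.lcm b := (Nat.gcd_mul_lcm a b).symm
    _ ≤ 2 * a.lcm b := Nat.mul_le_mul_right _ (Nat.le_of_dvd two_pos hgcd)

theorem lcm_gcd_sub_one_gcd_add_one_dvd_sub {k v v' : ℤ} (h₁ : k.gcd (v - 1) = k.gcd (v' - 1))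
    (h₂ : k.gcd (v + 1) = k.gcd (v' + 1)) :
    (((k.gcd (v - 1)).lcm (k.gcd (v + 1)) : ℕ) : ℤ) ∣ v' - v := by
  have e₁ : v' - v = (v' - 1) - (v - 1) := by ring
  have e₂ : v' - v = (v' + 1) - (v + 1) := by ring
  refine Int.natCast_dvd.mpr (Nat.lcm_dvd (Int.natCast_dvd.mp ?_) (Int.natCast_dvd.mp ?_))
  · rw [e₁]; exact dvd_sub (h₁ ▸ Int.gcd_dvd_right _ _) (Int.gcd_dvd_right _ _)
  · rw [e₂]; exact dvd_sub (h₂ ▸ Int.gcd_dvd_right _ _) (Int.gcd_dvd_right _ _)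

theorem card_sq_eq_one_le (k : ℕ) [NeZero k] :
    #{u : ZMod k | u ^ 2 = 1} ≤ 2 * #k.divisors ^ 2 := by
  -- `u` is determined by `gcd(k, u - 1)` and `gcd(k, u + 1)` modulo their lcm, which is `≥ k / 2`;
  -- the extra bit records in which half of `[0, k)` the representative `u.val` lies.
  let f : ZMod k → (ℕ × ℕ) × Bool := fun u =>
    (((k : ℤ).gcd (u.val - 1), (k : ℤ).gcd (u.val + 1)), decide (2 * u.val < k))
  have hcard : #((k.divisors ×ˢ k.divisors) ×ˢ (univ : Finset Bool)) = 2 * #k.divisors ^ 2 := by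
    simp only [card_product, card_univ, Fintype.card_bool]; ring
  rw [← hcard]
  refine card_le_card_of_injOn f (fun u _ => ?_) (fun u hu u' hu' huu' => ?_)
  · simp only [f, coe_product, Set.mem_prod, mem_coe, Nat.mem_divisors, coe_univ, Set.mem_univ,
      and_true]
    exact ⟨⟨Int.gcd_dvd_natAbs_left _ _, NeZero.ne k⟩, Int.gcd_dvd_natAbs_left _ _, NeZero.ne k⟩
  have hdvd : ∀ w : ZMod k, w ^ 2 = 1 → (k : ℤ) ∣ ((w.val : ℤ) - 1) * (w.val + 1) := by
    intro w hw
    rw [← ZMod.intCast_zmod_eq_zero_iff_dvd]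
    push_cast
    simp only [ZMod.natCast_val, ZMod.cast_id', id]
    linear_combination hw
  simp only [coe_filter, mem_univ, true_and, Set.mem_ofPred_eq] at hu hu'
  simp only [f, Prod.mk.injEq, decide_eq_decide] at huu'
  obtain ⟨⟨h₁, h₂⟩, hside⟩ := huu'
  have hk := le_two_mul_lcm_gcd_sub_one_gcd_add_one (hdvd u hu)
  rw [Int.natAbs_natCast] at hk
  set l := ((k : ℤ).gcd (u.val - 1)).lcm ((k : ℤ).gcd (u.val + 1))
  have hlt : |(u'.val : ℤ) - u.val| < l := by
    have := ZMod.val_lt u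
    have := ZMod.val_lt u'
    rw [abs_sub_lt_iff]
    omega
  have := Int.eq_zero_of_abs_lt_dvd (lcm_gcd_sub_one_gcd_add_one_dvd_sub h₁ h₂) hlt
  exact ZMod.val_injective k (by omega)

def sqAddSqReps (m : ℕ) : Finset (ℕ × ℕ) :=
  {q ∈ Icc 1 m ×ˢ Icc 1 m | q.1 ^ 2 + q.2 ^ 2 = m}

theorem mem_sqAddSqReps {m : ℕ} {q : ℕ × ℕ} :
    q ∈ sqAddSqReps m ↔ 0 < q.1 ∧ 0 < q.2 ∧ q.1 ^ 2 + q.2 ^ 2 = m := by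
  simp only [sqAddSqReps, mem_filter, mem_product, mem_Icc]
  constructor
  · rintro ⟨⟨⟨h₁, -⟩, h₂, -⟩, h⟩
    exact ⟨h₁, h₂, h⟩
  · rintro ⟨h₁, h₂, h⟩
    have := Nat.le_self_pow two_ne_zero q.1
    have := Nat.le_self_pow two_ne_zero q.2
    exact ⟨⟨⟨h₁, by omega⟩, h₂, by omega⟩, h⟩

theorem eq_of_sq_add_sq_eq_of_mul_modEq {k x y x' y' : ℕ} (hx : 0 < x) (hy : 0 < y)
    (h : x ^ 2 + y ^ 2 = k) (h' : x' ^ 2 + y' ^ 2 = k) (hmod : x * y' ≡ x' * y [MOD k]) :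
    x = x' ∧ y = y' := by
  have hk : 0 < k := by rw [← h]; positivity
  -- `(x'y - xy')² + (xx' + yy')² = k²` with `xx' + yy' > 0` forces `|x'y - xy'| < k`
  have hlt : |(x' * y - x * y' : ℤ)| < k := by
    have hpos : 0 < (x * x' + y * y' : ℤ) := by
      rcases Nat.eq_zero_or_pos x' with rfl | hx'
      · have : 0 < y' := by nlinarith
        positivity
      · positivity
    refine abs_lt_of_sq_lt_sq ?_ (by positivity)
    have hid : (x' * y - x * y' : ℤ) ^ 2 + (x * x' + y * y') ^ 2 = (k : ℤ) ^ 2 := by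
      rw [← Nat.cast_inj (R := ℤ)] at h h'
      push_cast at h h'
      linear_combination (x ^ 2 + y ^ 2 : ℤ) * h' + (k : ℤ) * h
    nlinarith
  have hcross : (x' * y : ℤ) = x * y' := by
    have := Int.eq_zero_of_abs_lt_dvd (by exact_mod_cast hmod.dvd) hlt
    linarith
  have hyy : y = y' := by
    have hsq : (k : ℤ) * (y ^ 2 - y' ^ 2) = 0 := by
      rw [← Nat.cast_inj (R := ℤ)] at h h'
      push_cast at h h'
      linear_combination (x' * y + x * y' : ℤ) * hcross - (y ^ 2 : ℤ) * h' + (y' ^ 2 : ℤ) * h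
    have : (y : ℤ) ^ 2 = y' ^ 2 := by
      linear_combination (mul_eq_zero.mp hsq).resolve_left (by positivity)
    exact Nat.pow_left_injective two_ne_zero (by exact_mod_cast this)
  subst hyy
  refine ⟨?_, rfl⟩
  have : (x' : ℤ) = x := mul_right_cancel₀ (by positivity) hcross
  exact_mod_cast this.symm

theorem card_primitive_sqAddSqReps_le (k : ℕ) :
    #{q ∈ sqAddSqReps k | q.1.Coprime q.2} ≤ 2 * #k.divisors ^ 2 := by
  rcases eq_or_ne k 0 with rfl | hk
  · simp [sqAddSqReps]
  have : NeZero k := ⟨hk⟩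
  refine le_trans ?_ (card_sq_eq_neg_one_le_card_sq_eq_one.trans (card_sq_eq_one_le k))
  have hmem : ∀ q ∈ {q ∈ sqAddSqReps k | q.1.Coprime q.2},
      0 < q.1 ∧ 0 < q.2 ∧ q.1 ^ 2 + q.2 ^ 2 = k ∧ (q.2 : ZMod k) * (q.2 : ZMod k)⁻¹ = 1 := by
    intro q hq
    obtain ⟨hq, hcop⟩ := mem_filter.mp hq
    obtain ⟨h₁, h₂, hsum⟩ := mem_sqAddSqReps.mp hq
    refine ⟨h₁, h₂, hsum, ZMod.mul_inv_of_unit _ ((ZMod.isUnit_iff_coprime _ _).mpr ?_)⟩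
    rw [← hsum, sq q.2, Nat.coprime_add_mul_right_right]
    exact hcop.symm.pow_right 2
  refine card_le_card_of_injOn (fun q => (q.1 : ZMod k) * (q.2 : ZMod k)⁻¹)
    (fun q hq => ?_) (fun q hq q' hq' hqq' => ?_)
  · obtain ⟨-, -, hsum, hinv⟩ := hmem q hq
    have hzero : (q.1 : ZMod k) ^ 2 + (q.2 : ZMod k) ^ 2 = 0 := by
      exact_mod_cast (congrArg (Nat.cast : ℕ → ZMod k) hsum).trans (ZMod.natCast_self k)
    simp only [coe_filter, mem_univ, true_and, Set.mem_ofPred_eq]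
    linear_combination
      ((q.2 : ZMod k)⁻¹) ^ 2 * hzero - (1 + (q.2 : ZMod k) * (q.2 : ZMod k)⁻¹) * hinv
  · obtain ⟨h₁, h₂, hsum, hinv⟩ := hmem q hq
    obtain ⟨-, -, hsum', hinv'⟩ := hmem q' hq'
    have hcross : ((q.1 * q'.2 : ℕ) : ZMod k) = ((q'.1 * q.2 : ℕ) : ZMod k) := by
      push_cast
      linear_combination (q.2 : ZMod k) * (q'.2 : ZMod k) * hqq'
        - (q.1 : ZMod k) * (q'.2 : ZMod k) * hinv + (q'.1 : ZMod k) * (q.2 : ZMod k) * hinv'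
    obtain ⟨e₁, e₂⟩ := eq_of_sq_add_sq_eq_of_mul_modEq h₁ h₂ hsum hsum'
      ((ZMod.natCast_eq_natCast_iff _ _ _).mp hcross)
    exact Prod.ext e₁ e₂

theorem sq_gcd_dvd_sq_add_sq (x y : ℕ) : x.gcd y ^ 2 ∣ x ^ 2 + y ^ 2 :=
  dvd_add (pow_dvd_pow_of_dvd (Nat.gcd_dvd_left x y) 2)
    (pow_dvd_pow_of_dvd (Nat.gcd_dvd_right x y) 2)

theorem div_gcd_mem_primitive_sqAddSqReps {x y : ℕ} (hx : 0 < x) (hy : 0 < y) :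
    (x / x.gcd y, y / x.gcd y) ∈
      {q ∈ sqAddSqReps ((x ^ 2 + y ^ 2) / x.gcd y ^ 2) | q.1.Coprime q.2} := by
  have hg : 0 < x.gcd y := Nat.gcd_pos_of_pos_left _ hx
  have hcop := Nat.coprime_div_gcd_div_gcd hg
  obtain ⟨a, ha⟩ := Nat.gcd_dvd_left x y
  obtain ⟨b, hb⟩ := Nat.gcd_dvd_right x y
  generalize x.gcd y = g at *
  subst ha hb
  rw [Nat.mul_div_cancel_left _ hg, Nat.mul_div_cancel_left _ hg] at hcop ⊢
  have hsum : (g * a) ^ 2 + (g * b) ^ 2 = g ^ 2 * (a ^ 2 + b ^ 2) := by ring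
  rw [hsum, Nat.mul_div_cancel_left _ (by positivity), mem_filter, mem_sqAddSqReps]
  exact ⟨⟨Nat.pos_of_mul_pos_left hx, Nat.pos_of_mul_pos_left hy, rfl⟩, hcop⟩

theorem card_sqAddSqReps_le (m : ℕ) : #(sqAddSqReps m) ≤ 2 * #m.divisors ^ 3 := by
  rcases eq_or_ne m 0 with rfl | hm
  · simp [sqAddSqReps]
  have hfiber : ∀ g, #{q ∈ sqAddSqReps m | q.1.gcd q.2 = g} ≤ 2 * #m.divisors ^ 2 := by
    intro g
    obtain h | ⟨q₀, hq₀⟩ := eq_empty_or_nonempty {q ∈ sqAddSqReps m | q.1.gcd q.2 = g}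
    · simp [h]
    obtain ⟨hq₀m, rfl⟩ := mem_filter.mp hq₀
    have hdvd : q₀.1.gcd q₀.2 ^ 2 ∣ m := by
      obtain ⟨-, -, hsum⟩ := mem_sqAddSqReps.mp hq₀m
      exact hsum ▸ sq_gcd_dvd_sq_add_sq _ _
    calc #{q ∈ sqAddSqReps m | q.1.gcd q.2 = q₀.1.gcd q₀.2}
        ≤ #{q ∈ sqAddSqReps (m / q₀.1.gcd q₀.2 ^ 2) | q.1.Coprime q.2} := by
          refine card_le_card_of_injOn (fun q => (q.1 / q₀.1.gcd q₀.2, q.2 / q₀.1.gcd q₀.2))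
            (fun q hq => ?_) (fun q hq q' hq' hqq' => ?_)
          · obtain ⟨hq, hg⟩ := mem_filter.mp hq
            obtain ⟨h₁, h₂, hsum⟩ := mem_sqAddSqReps.mp hq
            have := div_gcd_mem_primitive_sqAddSqReps h₁ h₂
            rw [hsum, hg] at this
            exact this
          · obtain ⟨-, hg⟩ := mem_filter.mp hq
            obtain ⟨-, hg'⟩ := mem_filter.mp hq'
            obtain ⟨e₁, e₂⟩ := Prod.mk.inj hqq'
            exact Prod.ext ((Nat.div_left_inj (hg ▸ Nat.gcd_dvd_left _ _)
              (hg' ▸ Nat.gcd_dvd_left _ _)).mp e₁) ((Nat.div_left_inj (hg ▸ Nat.gcd_dvd_right _ _)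
              (hg' ▸ Nat.gcd_dvd_right _ _)).mp e₂)
      _ ≤ 2 * #(m / q₀.1.gcd q₀.2 ^ 2).divisors ^ 2 := card_primitive_sqAddSqReps_le _
      _ ≤ 2 * #m.divisors ^ 2 := by
          gcongr
          exact Nat.div_dvd_of_dvd hdvd
  calc #(sqAddSqReps m) ≤ 2 * #m.divisors ^ 2 * #m.divisors := by
        refine card_le_mul_card_image_of_maps_to (f := fun q => q.1.gcd q.2) (fun q hq => ?_) _
          (fun g _ => hfiber g)
        obtain ⟨h₁, -, hsum⟩ := mem_sqAddSqReps.mp hq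
        rw [Nat.mem_divisors, ← hsum]
        exact ⟨(dvd_pow_self _ two_ne_zero).trans (sq_gcd_dvd_sq_add_sq _ _), by rwa [hsum]⟩
    _ = 2 * #m.divisors ^ 3 := by ring

theorem card_sqAddSqReps_le_mul_rpow {δ : ℝ} (hδ : 0 < δ) :
    ∃ C > 0, ∀ m : ℕ, (#(sqAddSqReps m) : ℝ) ≤ C * (m : ℝ) ^ δ := by
  obtain ⟨C, hC, hd⟩ := card_divisors_le_mul_rpow (δ := δ / 3) (by positivity)
  refine ⟨2 * C ^ 3, by positivity, fun m => ?_⟩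
  rcases eq_or_ne m 0 with rfl | hm
  · simp [sqAddSqReps]; positivity
  calc (#(sqAddSqReps m) : ℝ) ≤ 2 * (#m.divisors : ℝ) ^ 3 := by exact_mod_cast card_sqAddSqReps_le m
    _ ≤ 2 * (C * (m : ℝ) ^ (δ / 3)) ^ 3 := by gcongr; exact hd m hm
    _ = 2 * C ^ 3 * (m : ℝ) ^ δ := by
        rw [mul_pow, ← rpow_natCast ((m : ℝ) ^ (δ / 3)), ← rpow_mul (by positivity)]; ring_nf

/-- `(abc)² = (4 R · area)²` for the triangle `a, a + u, a + v` inscribed in the circle of radius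
`R = |a|` centred at `0`. -/
theorem four_mul_sq_norm_mul_sq_cross {R : Type*} [CommRing R] {a₁ a₂ u₁ u₂ v₁ v₂ : R}
    (hu : 2 * (a₁ * u₁ + a₂ * u₂) + (u₁ ^ 2 + u₂ ^ 2) = 0)
    (hv : 2 * (a₁ * v₁ + a₂ * v₂) + (v₁ ^ 2 + v₂ ^ 2) = 0) :
    4 * (a₁ ^ 2 + a₂ ^ 2) * (u₁ * v₂ - u₂ * v₁) ^ 2 =
      (u₁ ^ 2 + u₂ ^ 2) * (v₁ ^ 2 + v₂ ^ 2) * ((u₁ - v₁) ^ 2 + (u₂ - v₂) ^ 2) := by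
  linear_combination
    ((2 * (a₁ * u₁ + a₂ * u₂) - (u₁ ^ 2 + u₂ ^ 2)) * (v₁ ^ 2 + v₂ ^ 2)
      - 4 * (u₁ * v₁ + u₂ * v₂) * (a₁ * v₁ + a₂ * v₂)) * hu
    + (2 * (u₁ * v₁ + u₂ * v₂) + 2 * (a₁ * v₁ + a₂ * v₂) - (v₁ ^ 2 + v₂ ^ 2))
      * (u₁ ^ 2 + u₂ ^ 2) * hv

theorem sq_dist_pos {A B : ℤ × ℤ} (h : A ≠ B) : 0 < (B.1 - A.1) ^ 2 + (B.2 - A.2) ^ 2 := by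
  by_cases h₁ : A.1 = B.1
  · have h₂ : B.2 - A.2 ≠ 0 := sub_ne_zero.mpr fun h₂ => h (Prod.ext h₁ h₂.symm)
    positivity
  · have : B.1 - A.1 ≠ 0 := sub_ne_zero.mpr (Ne.symm h₁)
    positivity

theorem four_mul_le_of_sq_norm_eq {m : ℤ} {P Q S : ℤ × ℤ} (hP : P.1 ^ 2 + P.2 ^ 2 = m)
    (hQ : Q.1 ^ 2 + Q.2 ^ 2 = m) (hS : S.1 ^ 2 + S.2 ^ 2 = m)
    (hPQ : P ≠ Q) (hPS : P ≠ S) (hQS : Q ≠ S) :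
    4 * m ≤ ((Q.1 - P.1) ^ 2 + (Q.2 - P.2) ^ 2) * ((S.1 - P.1) ^ 2 + (S.2 - P.2) ^ 2) *
      ((S.1 - Q.1) ^ 2 + (S.2 - Q.2) ^ 2) := by
  have hid := four_mul_sq_norm_mul_sq_cross (a₁ := P.1) (a₂ := P.2) (u₁ := Q.1 - P.1)
    (u₂ := Q.2 - P.2) (v₁ := S.1 - P.1) (v₂ := S.2 - P.2)
    (by linear_combination hQ - hP) (by linear_combination hS - hP)
  set Δ := (Q.1 - P.1) * (S.2 - P.2) - (Q.2 - P.2) * (S.1 - P.1)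
  have hprod := mul_pos (mul_pos (sq_dist_pos hPQ) (sq_dist_pos hPS)) (sq_dist_pos hQS)
  have hΔ : Δ ≠ 0 := by
    rintro hΔ
    refine hprod.ne' ?_
    rw [hΔ] at hid
    linear_combination -hid
  have hm : 0 ≤ m := hP ▸ by positivity
  calc 4 * m ≤ 4 * m * Δ ^ 2 :=
        le_mul_of_one_le_right (by positivity) (by nlinarith [Int.one_le_abs hΔ, sq_abs Δ])
    _ = _ := by rw [← hP]; linear_combination hid

theorem card_le_two_of_sq_norm_eq {s : Finset (ℕ × ℕ)} {m : ℕ} {W : ℝ} (hm : 2 * W ^ 6 < m)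
    (hs : ∀ q ∈ s, q.1 ^ 2 + q.2 ^ 2 = m)
    (hclose : ∀ q ∈ s, ∀ q' ∈ s, |(q'.1 : ℝ) - q.1| ≤ W ∧ |(q'.2 : ℝ) - q.2| ≤ W) :
    #s ≤ 2 := by
  by_contra! h
  obtain ⟨p, hp, q, hq, r, hr, hpq, hpr, hqr⟩ := two_lt_card.mp h
  let ι : ℕ × ℕ → ℤ × ℤ := fun q => (q.1, q.2)
  have hι : Function.Injective ι := fun q q' h => by
    simp only [ι, Prod.mk.injEq, Nat.cast_inj] at h; exact Prod.ext h.1 h.2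
  have hnorm : ∀ q ∈ s, (ι q).1 ^ 2 + (ι q).2 ^ 2 = m := fun q hq => by
    simp only [ι]; exact_mod_cast hs q hq
  have hdist : ∀ q ∈ s, ∀ q' ∈ s, ((q'.1 : ℝ) - q.1) ^ 2 + ((q'.2 : ℝ) - q.2) ^ 2 ≤ 2 * W ^ 2 := by
    intro q hq q' hq'
    obtain ⟨h₁, h₂⟩ := hclose q hq q' hq'
    have h₁ := sq_le_sq' (abs_le.mp h₁).1 (abs_le.mp h₁).2
    have h₂ := sq_le_sq' (abs_le.mp h₂).1 (abs_le.mp h₂).2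
    linarith
  have key := Int.cast_le (R := ℝ) |>.mpr <| four_mul_le_of_sq_norm_eq (hnorm p hp) (hnorm q hq)
    (hnorm r hr) (hι.ne hpq) (hι.ne hpr) (hι.ne hqr)
  push_cast [ι] at key
  have key' : (4 * m : ℝ) ≤ 2 * W ^ 2 * (2 * W ^ 2) * (2 * W ^ 2) := by
    refine key.trans ?_
    gcongr
    · exact hdist p hp q hq
    · exact hdist p hp r hr
    · exact hdist q hq r hr
  nlinarith

theorem ncard_le_of_sq_norm_close {T : Set (ℕ × ℕ)} {W F : ℝ} {D : ℕ}
    (hpos : ∀ q ∈ T, 0 < q.1 ∧ 0 < q.2)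
    (hclose : ∀ q ∈ T, ∀ q' ∈ T, |(q'.1 : ℝ) - q.1| ≤ W ∧ |(q'.2 : ℝ) - q.2| ≤ W)
    (hnorm : ∀ q ∈ T, ∀ q' ∈ T, q.1 ^ 2 + q.2 ^ 2 ≤ q'.1 ^ 2 + q'.2 ^ 2 + D)
    (hF : 2 ≤ F) (hreps : ∀ m : ℕ, (m : ℝ) ≤ 2 * W ^ 6 → (#(sqAddSqReps m) : ℝ) ≤ F) :
    (T.ncard : ℝ) ≤ (2 * D + 1) * F := by
  obtain rfl | ⟨q₀, hq₀⟩ := T.eq_empty_or_nonempty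
  · simp only [Set.ncard_empty, Nat.cast_zero]; positivity
  set N := q₀.1 ^ 2 + q₀.2 ^ 2
  have hfin : T.Finite := (Set.finite_Iic (N + D, N + D)).subset fun q hq => by
    have := hnorm q hq q₀ hq₀
    have := Nat.le_self_pow two_ne_zero q.1
    have := Nat.le_self_pow two_ne_zero q.2
    exact ⟨by simp only; omega, by simp only; omega⟩
  have hmaps : ∀ q ∈ hfin.toFinset, q.1 ^ 2 + q.2 ^ 2 ∈ Icc (N - D) (N + D) := fun q hq => by
    rw [Set.Finite.mem_toFinset] at hq
    have := hnorm q hq q₀ hq₀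
    have := hnorm q₀ hq₀ q hq
    rw [mem_Icc]; omega
  have hfiber : ∀ m, (#{q ∈ hfin.toFinset | q.1 ^ 2 + q.2 ^ 2 = m} : ℝ) ≤ F := by
    intro m
    by_cases hm : (m : ℝ) ≤ 2 * W ^ 6
    · refine le_trans ?_ (hreps m hm)
      refine Nat.cast_le.mpr (card_le_card fun q hq => ?_)
      obtain ⟨hq, hqm⟩ := mem_filter.mp hq
      rw [Set.Finite.mem_toFinset] at hq
      exact mem_sqAddSqReps.mpr ⟨(hpos q hq).1, (hpos q hq).2, hqm⟩
    · refine le_trans (Nat.cast_le.mpr (card_le_two_of_sq_norm_eq (not_le.mp hm)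
        (fun q hq => (mem_filter.mp hq).2) fun q hq q' hq' => ?_)) (by exact_mod_cast hF)
      simp only [mem_filter, Set.Finite.mem_toFinset] at hq hq'
      exact hclose q hq.1 q' hq'.1
  rw [Set.ncard_eq_toFinset_card T hfin, card_eq_sum_card_fiberwise hmaps]
  push_cast
  calc ∑ m ∈ Icc (N - D) (N + D), (#{q ∈ hfin.toFinset | q.1 ^ 2 + q.2 ^ 2 = m} : ℝ)
      ≤ #(Icc (N - D) (N + D)) * F := by
        rw [← nsmul_eq_mul, ← sum_const]; exact sum_le_sum fun m _ => hfiber m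
    _ ≤ (2 * D + 1) * F := by
        gcongr
        rw [Nat.card_Icc]
        exact_mod_cast (by omega : N + D + 1 - (N - D) ≤ 2 * D + 1)

section Asymptotics

variable {C₁ : ℝ} {z : ℕ → ℝ}

theorem nonneg_of_asymp (hz : ∀ n : ℕ, 1 ≤ n → |z n - π * (n - 1 / 4)| ≤ C₁ / n) : 0 ≤ C₁ := by
  simpa using (abs_nonneg _).trans (hz 1 le_rfl)

theorem abs_sub_le_of_asymp (hz : ∀ n : ℕ, 1 ≤ n → |z n - π * (n - 1 / 4)| ≤ C₁ / n) {n : ℕ}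
    (hn : 1 ≤ n) : |z n - π / 4 * (4 * n - 1)| ≤ C₁ / n := by
  convert hz n hn using 2; ring

theorem abs_sq_sub_sq_le_of_asymp (hz : ∀ n : ℕ, 1 ≤ n → |z n - π * (n - 1 / 4)| ≤ C₁ / n)
    {n : ℕ} (hn : 1 ≤ n) : |z n ^ 2 - (π / 4 * (4 * n - 1)) ^ 2| ≤ 2 * π * C₁ + C₁ ^ 2 := by
  have hn' : (1 : ℝ) ≤ n := by exact_mod_cast hn
  have hC₁ := nonneg_of_asymp hz
  have he := abs_sub_le_of_asymp hz hn
  set w := π / 4 * (4 * n - 1)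
  have he' : |z n - w| ≤ C₁ := he.trans (div_le_self hC₁ hn')
  have hw : 0 ≤ w := mul_nonneg (by positivity) (by linarith)
  have h2w : C₁ / n * (2 * w) ≤ 2 * π * C₁ := by
    have : 2 * w ≤ 2 * π * n := by simp only [w]; nlinarith [pi_pos]
    rw [div_mul_eq_mul_div, div_le_iff₀ (by linarith)]
    nlinarith [mul_le_mul_of_nonneg_left this hC₁]
  calc |z n ^ 2 - w ^ 2| = |z n - w| * |2 * w + (z n - w)| := by rw [← abs_mul]; ring_nf
    _ ≤ |z n - w| * (2 * w + |z n - w|) := by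
        gcongr; exact (abs_add_le _ _).trans_eq (by rw [abs_of_nonneg (by positivity)])
    _ ≤ C₁ / n * (2 * w) + C₁ * C₁ := by
        rw [mul_add]; gcongr
    _ ≤ 2 * π * C₁ + C₁ ^ 2 := by nlinarith

theorem abs_sub_le_of_asymp_of_mem_Icc (hz : ∀ n : ℕ, 1 ≤ n → |z n - π * (n - 1 / 4)| ≤ C₁ / n)
    {n n' : ℕ} (hn : 1 ≤ n) (hn' : 1 ≤ n') {a L : ℝ} (hL : 2 ≤ L) (h : z n ∈ Set.Icc a (a + L))
    (h' : z n' ∈ Set.Icc a (a + L)) :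
    |(4 * n' - 1 : ℝ) - (4 * n - 1)| ≤ 2 * (1 + C₁) * L := by
  have hC₁ := nonneg_of_asymp hz
  have he := (abs_sub_le_of_asymp hz hn).trans (div_le_self hC₁ (by exact_mod_cast hn))
  have he' := (abs_sub_le_of_asymp hz hn').trans (div_le_self hC₁ (by exact_mod_cast hn'))
  have hd : |π / 4 * ((4 * n' - 1 : ℝ) - (4 * n - 1))| ≤ (1 + C₁) * L := by
    rw [abs_le] at he he' ⊢
    constructor <;> nlinarith [h.1, h.2, h'.1, h'.2]
  rw [abs_mul, abs_of_pos (by positivity)] at hd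
  nlinarith [pi_gt_three, abs_nonneg ((4 * n' - 1 : ℝ) - (4 * n - 1))]

def windowPairs (z : ℕ → ℝ) (a L ℓ : ℝ) : Set (ℕ × ℕ) :=
  {p | 1 ≤ p.1 ∧ 1 ≤ p.2 ∧ z p.1 ∈ Set.Icc a (a + L) ∧ z p.2 ∈ Set.Icc a (a + L) ∧
    |z p.1 ^ 2 + z p.2 ^ 2 - ℓ| < 1}

theorem sq_add_sq_le_of_mem_windowPairs
    (hz : ∀ n : ℕ, 1 ≤ n → |z n - π * (n - 1 / 4)| ≤ C₁ / n) {a L ℓ : ℝ} {p p' : ℕ × ℕ}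
    (hp : p ∈ windowPairs z a L ℓ) (hp' : p' ∈ windowPairs z a L ℓ) :
    (4 * p.1 - 1 : ℝ) ^ 2 + (4 * p.2 - 1) ^ 2 ≤
      (4 * p'.1 - 1) ^ 2 + (4 * p'.2 - 1) ^ 2 + (8 * (2 * π * C₁ + C₁ ^ 2) + 4) := by
  obtain ⟨hp₁, hp₂, -, -, hℓ⟩ := hp
  obtain ⟨hp₁', hp₂', -, -, hℓ'⟩ := hp'
  have hK : 0 ≤ 2 * π * C₁ + C₁ ^ 2 := by have := nonneg_of_asymp hz; positivity
  have h₁ := abs_le.mp (abs_sq_sub_sq_le_of_asymp hz hp₁)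
  have h₂ := abs_le.mp (abs_sq_sub_sq_le_of_asymp hz hp₂)
  have h₁' := abs_le.mp (abs_sq_sub_sq_le_of_asymp hz hp₁')
  have h₂' := abs_le.mp (abs_sq_sub_sq_le_of_asymp hz hp₂')
  rw [abs_lt] at hℓ hℓ'
  set X := (4 * p.1 - 1 : ℝ) ^ 2 + (4 * p.2 - 1) ^ 2
  set X' := (4 * p'.1 - 1 : ℝ) ^ 2 + (4 * p'.2 - 1) ^ 2
  have hdiff : π ^ 2 / 16 * (X - X') ≤ 2 + 4 * (2 * π * C₁ + C₁ ^ 2) := by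
    simp only [X, X']
    nlinarith
  have hπ : 9 < π ^ 2 := by nlinarith [pi_gt_three]
  by_contra! hlt
  nlinarith [mul_lt_mul_of_pos_right hπ (by linarith : 0 < X - X')]

theorem cast_four_mul_sub_one {n : ℕ} (hn : 1 ≤ n) : ((4 * n - 1 : ℕ) : ℝ) = 4 * n - 1 := by
  rw [Nat.cast_sub (by omega)]; push_cast; ring

theorem ncard_windowPairs_le (hz : ∀ n : ℕ, 1 ≤ n → |z n - π * (n - 1 / 4)| ≤ C₁ / n)
    {a L ℓ F : ℝ} (hL : 2 ≤ L) (hF : 2 ≤ F)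
    (hreps : ∀ m : ℕ, (m : ℝ) ≤ 2 * (2 * (1 + C₁) * L) ^ 6 → (#(sqAddSqReps m) : ℝ) ≤ F) :
    ((windowPairs z a L ℓ).ncard : ℝ) ≤ (2 * ⌈8 * (2 * π * C₁ + C₁ ^ 2) + 4⌉₊ + 1) * F := by
  set f : ℕ × ℕ → ℕ × ℕ := fun p => (4 * p.1 - 1, 4 * p.2 - 1)
  have hinj : Set.InjOn f (windowPairs z a L ℓ) := fun p hp p' hp' h => by
    obtain ⟨h₁, h₂⟩ := Prod.mk.inj h
    have := hp.1; have := hp.2.1; have := hp'.1; have := hp'.2.1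
    exact Prod.ext (by omega) (by omega)
  rw [← hinj.ncard_image]
  refine ncard_le_of_sq_norm_close ?_ ?_ ?_ hF hreps
  · rintro _ ⟨p, ⟨h₁, h₂, -⟩, rfl⟩
    exact ⟨by simp only [f]; omega, by simp only [f]; omega⟩
  · rintro _ ⟨p, ⟨h₁, h₂, hz₁, hz₂, -⟩, rfl⟩ _ ⟨p', ⟨h₁', h₂', hz₁', hz₂', -⟩, rfl⟩
    simp only [f, cast_four_mul_sub_one h₁, cast_four_mul_sub_one h₂, cast_four_mul_sub_one h₁',
      cast_four_mul_sub_one h₂']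
    exact ⟨abs_sub_le_of_asymp_of_mem_Icc hz h₁ h₁' hL hz₁ hz₁',
      abs_sub_le_of_asymp_of_mem_Icc hz h₂ h₂' hL hz₂ hz₂'⟩
  · rintro _ ⟨p, hp, rfl⟩ _ ⟨p', hp', rfl⟩
    have := sq_add_sq_le_of_mem_windowPairs hz hp hp'
    rw [← cast_four_mul_sub_one hp.1, ← cast_four_mul_sub_one hp.2.1,
      ← cast_four_mul_sub_one hp'.1, ← cast_four_mul_sub_one hp'.2.1] at this
    exact_mod_cast this.trans (add_le_add_right (Nat.le_ceil _) _)

end Asymptotics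

theorem pair_count_interval_polynomial_bound_general (C₁ : ℝ) (z : ℕ → ℝ)
    (hz : ∀ n : ℕ, 1 ≤ n → |z n - π * (n - 1 / 4)| ≤ C₁ / n) :
    ∀ ε > (0 : ℝ), ∃ C > (0 : ℝ), ∀ a L : ℝ, L ≥ 2 → ∀ ℓ : ℝ,
      (({p : ℕ × ℕ | 1 ≤ p.1 ∧ 1 ≤ p.2 ∧
          z p.1 ∈ Set.Icc a (a + L) ∧ z p.2 ∈ Set.Icc a (a + L) ∧
          |z p.1 ^ 2 + z p.2 ^ 2 - ℓ| < 1}).ncard : ℝ)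
        ≤ C * L ^ ε := by
  intro ε hε
  obtain ⟨Cr, hCr, hreps⟩ := card_sqAddSqReps_le_mul_rpow (δ := ε / 6) (by positivity)
  set c := 2 * (1 + C₁)
  set D := ⌈8 * (2 * π * C₁ + C₁ ^ 2) + 4⌉₊
  refine ⟨(2 * D + 1) * (2 + Cr * (2 * c ^ 6) ^ (ε / 6)), by positivity, fun a L hL ℓ => ?_⟩
  have hsplit : (2 * (c * L) ^ 6) ^ (ε / 6) = (2 * c ^ 6) ^ (ε / 6) * L ^ ε := by
    rw [mul_pow, ← mul_assoc, mul_rpow (by positivity) (by positivity), ← rpow_natCast L,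
      ← rpow_mul (by linarith)]
    congr 2
    push_cast
    ring
  have hLε : 1 ≤ L ^ ε := one_le_rpow (by linarith) hε.le
  have hCr' : 0 ≤ Cr * (2 * c ^ 6) ^ (ε / 6) := by positivity
  calc _ ≤ (2 * D + 1) * (2 + Cr * (2 * (c * L) ^ 6) ^ (ε / 6)) :=
        ncard_windowPairs_le (a := a) (ℓ := ℓ) hz hL (le_add_of_nonneg_right (by positivity))
          fun m hm => (hreps m).trans (le_add_of_nonneg_of_le zero_le_two (by gcongr))
    _ ≤ (2 * D + 1) * (2 + Cr * (2 * c ^ 6) ^ (ε / 6)) * L ^ ε := by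
        rw [hsplit]; nlinarith

/-- Polynomial-growth pair-counting bound: for frequencies `z_n` satisfying the radial
Dirichlet eigenvalue asymptotics on the disc, for every `ε > 0` the number of pairs
`(n, n')` of positive integers with `z_n, z_{n'}` in an interval `I` of length `L ≥ 2`
and `|z_n² + z_{n'}² − ℓ| < 1` is at most `C_ε · L^ε`. -/
theorem pair_count_interval_polynomial_bound (C₁ : ℝ) (hC₁ : 0 < C₁) (z : ℕ → ℝ)
    (hz : ∀ n : ℕ, 1 ≤ n → |z n - π * (n - 1 / 4)| ≤ C₁ / n) :
    ∀ ε > (0 : ℝ), ∃ C > (0 : ℝ), ∀ a L : ℝ, L ≥ 2 → ∀ ℓ : ℝ,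
      (({p : ℕ × ℕ | 1 ≤ p.1 ∧ 1 ≤ p.2 ∧
          z p.1 ∈ Set.Icc a (a + L) ∧ z p.2 ∈ Set.Icc a (a + L) ∧
          |z p.1 ^ 2 + z p.2 ^ 2 - ℓ| < 1}).ncard : ℝ)
        ≤ C * L ^ ε :=
  pair_count_interval_polynomial_bound_general C₁ z hz
end

section
/- Let c₀ > 0, let (z_n)_{n≥1} be a sequence of real numbers with z_n ≥ c₀ n for all n ≥ 1, let (g_n)_{n≥1} be independent standard complex Gaussian random variables, and fix 0 ≤ s < 1/2. Then there exist constants c > 0 and C > 0 (depending only on c₀ and s) such that for every integer N₀ ≥ 2 and every λ > 0, P({ N₀^{1/2 − s} (∑_{n ≥ N₀} |g_n|² / z_n^{2(1−s)})^{1/2} > λ }) ≤ C exp(−λ^c). -/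
open MeasureTheory ProbabilityTheory Real

/-! Write `q = 1 - 2s` and `a n = z n ^ (-(q + 1))`; the event is
`λ² N₀^(-q) < ∑_{n ≥ N₀} a n |g n|²`. Each `|g n|²` is a standard exponential variable, so
`E exp(u |g n|²) = (1 - u)⁻¹ ≤ exp (2u)` for `0 ≤ u ≤ 1/2`. A Chernoff bound with parameter
`t ≍ N₀^q` (admissible since `a n ≲ n^(-1-q)`, so `t a n ≲ N₀⁻¹`), together with
`∑_{n ≥ N₀} n^(-1-q) ≲ N₀^(-q) / q`, bounds the probability by `exp (C - c λ²) ≲ exp (-λ)`. -/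

/-- A standard complex Gaussian random variable: `g = X + iY` with `X, Y` independent
real centered Gaussians of variance `1/2` (so that `E|g|² = 1`). -/
def IsStdComplexGaussian {Ω : Type*} [MeasurableSpace Ω] (μ : Measure Ω) (g : Ω → ℂ) :
    Prop :=
  Measurable g ∧
    Measure.map (fun ω => (g ω).re) μ = gaussianReal 0 (1 / 2) ∧
    Measure.map (fun ω => (g ω).im) μ = gaussianReal 0 (1 / 2) ∧
    IndepFun (fun ω => (g ω).re) (fun ω => (g ω).im) μ

open Finset
open scoped ENNReal NNReal

lemma inv_one_sub_le_exp_two_mul {u : ℝ} (h0 : 0 ≤ u) (h : u ≤ 1 / 2) :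
    (1 - u)⁻¹ ≤ exp (2 * u) :=
  calc (1 - u)⁻¹ ≤ 1 + 2 * u := by
        rw [inv_le_iff_one_le_mul₀ (by linarith)]
        nlinarith
    _ ≤ exp (2 * u) := by linarith [add_one_le_exp (2 * u)]

lemma le_mul_sq_add_inv_four_mul {a : ℝ} (ha : 0 < a) (x : ℝ) :
    x ≤ a * x ^ 2 + (4 * a)⁻¹ := by
  have h : a * x ^ 2 + (4 * a)⁻¹ - x = (2 * a * x - 1) ^ 2 / (4 * a) := by
    field_simp
    ring
  linarith [div_nonneg (sq_nonneg (2 * a * x - 1)) (by positivity : (0 : ℝ) ≤ 4 * a)]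

lemma lt_rpow_mul_sqrt_iff {x lam T s : ℝ} (hx : 0 < x) (hlam : 0 ≤ lam) :
    lam < x ^ (1 / 2 - s) * √T ↔ lam ^ 2 / x ^ (1 - 2 * s) < T := by
  rw [← div_lt_iff₀' (by positivity), lt_sqrt (by positivity), div_pow,
    ← rpow_mul_natCast hx.le]
  ring_nf

lemma inv_rpow_le_of_mul_le {c x y p : ℝ} (hc : 0 < c) (hx : 0 < x) (h : c * x ≤ y)
    (hp : 0 ≤ p) : (y ^ p)⁻¹ ≤ (c ^ p)⁻¹ * x ^ (-p) := by
  rw [rpow_neg hx.le, ← mul_inv, ← mul_rpow hc.le hx.le]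
  exact inv_anti₀ (by positivity) (rpow_le_rpow (by positivity) h hp)

lemma mul_rpow_neg_succ_le_rpow_neg_sub {q x : ℝ} (hq : 0 ≤ q) (hx : 0 < x) :
    q * (x + 1) ^ (-(q + 1)) ≤ x ^ (-q) - (x + 1) ^ (-q) := by
  obtain ⟨c, ⟨hxc, hc⟩, hslope⟩ := exists_hasDerivAt_eq_slope (fun y ↦ y ^ (-q))
    (fun y ↦ -q * y ^ (-q - 1)) (lt_add_one x)
    (continuousOn_id.rpow_const fun y hy ↦ Or.inl (hx.trans_le hy.1).ne')
    (fun y hy ↦ hasDerivAt_rpow_const (Or.inl (hx.trans hy.1).ne'))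
  have hmono : (x + 1) ^ (-(q + 1)) ≤ c ^ (-q - 1) := by
    rw [← neg_add']
    exact rpow_le_rpow_of_nonpos (hx.trans hxc) hc.le (by linarith)
  rw [add_sub_cancel_left, div_one] at hslope
  calc q * (x + 1) ^ (-(q + 1)) ≤ q * c ^ (-q - 1) := mul_le_mul_of_nonneg_left hmono hq
    _ = x ^ (-q) - (x + 1) ^ (-q) := by linarith

lemma rpow_neg_le_two_rpow_mul_rpow_neg_succ {p x : ℝ} (hp : 0 ≤ p) (hx : 1 ≤ x) :
    x ^ (-p) ≤ 2 ^ p * (x + 1) ^ (-p) :=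
  calc x ^ (-p) = 2 ^ p * (2 * x) ^ (-p) := by
        rw [mul_rpow zero_le_two (by linarith), ← mul_assoc, ← rpow_add two_pos]
        simp
    _ ≤ 2 ^ p * (x + 1) ^ (-p) := by
        refine mul_le_mul_of_nonneg_left ?_ (by positivity)
        exact rpow_le_rpow_of_nonpos (by linarith) (by linarith) (by linarith)

lemma sum_Ico_rpow_neg_le {q : ℝ} (hq : 0 < q) {N : ℕ} (hN : 1 ≤ N) (M : ℕ) :
    ∑ n ∈ Ico N M, (n : ℝ) ^ (-(q + 1)) ≤ 2 ^ (q + 1) / q * (N : ℝ) ^ (-q) := by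
  rcases lt_or_ge M N with hMN | hNM
  · rw [Ico_eq_empty_of_le hMN.le, sum_empty]
    positivity
  have hterm : ∀ n ∈ Ico N M, (n : ℝ) ^ (-(q + 1)) ≤
      2 ^ (q + 1) / q * ((n : ℝ) ^ (-q) - ((n + 1 : ℕ) : ℝ) ^ (-q)) := by
    intro n hn
    have hn : (1 : ℝ) ≤ n := by exact_mod_cast hN.trans (mem_Ico.mp hn).1
    push_cast
    calc (n : ℝ) ^ (-(q + 1)) ≤ 2 ^ (q + 1) * ((n : ℝ) + 1) ^ (-(q + 1)) :=
          rpow_neg_le_two_rpow_mul_rpow_neg_succ (by linarith) hn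
      _ = 2 ^ (q + 1) / q * (q * ((n : ℝ) + 1) ^ (-(q + 1))) := by field_simp
      _ ≤ _ := by gcongr; exact mul_rpow_neg_succ_le_rpow_neg_sub hq.le (by linarith)
  have htel := sum_Ico_sub (fun n : ℕ ↦ (n : ℝ) ^ (-q)) hNM
  rw [sum_sub_distrib] at htel
  calc ∑ n ∈ Ico N M, (n : ℝ) ^ (-(q + 1))
      ≤ 2 ^ (q + 1) / q * ∑ n ∈ Ico N M, ((n : ℝ) ^ (-q) - ((n + 1 : ℕ) : ℝ) ^ (-q)) := by
        rw [mul_sum]; exact sum_le_sum hterm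
    _ = 2 ^ (q + 1) / q * ((N : ℝ) ^ (-q) - (M : ℝ) ^ (-q)) := by
        rw [sum_sub_distrib]; congr 1; linarith
    _ ≤ 2 ^ (q + 1) / q * (N : ℝ) ^ (-q) := by
        gcongr
        linarith [rpow_nonneg (Nat.cast_nonneg M) (-q)]

lemma gaussianPDFReal_zero_mul_exp_mul_sq (v : ℝ≥0) (u x : ℝ) :
    gaussianPDFReal 0 v x * exp (u * x ^ 2) =
      (√(2 * π * v))⁻¹ * exp (-((2 * (v : ℝ))⁻¹ - u) * x ^ 2) := by
  rw [gaussianPDFReal, mul_assoc, ← exp_add]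
  congr 2
  ring

lemma inv_two_mul_sub_eq_div {v u : ℝ} (hv : v ≠ 0) :
    (2 * v)⁻¹ - u = (1 - 2 * u * v) / (2 * v) := by
  field_simp

lemma integrable_exp_mul_sq_gaussianReal {v : ℝ≥0} {u : ℝ} (h : 2 * u * v < 1) :
    Integrable (fun x ↦ exp (u * x ^ 2)) (gaussianReal 0 v) := by
  rcases eq_or_ne v 0 with rfl | hv
  · simp [integrable_dirac]
  have hb : 0 < (2 * (v : ℝ))⁻¹ - u := by
    have : 0 < (v : ℝ) := by positivity
    rw [inv_two_mul_sub_eq_div this.ne']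
    exact div_pos (by linarith) (by positivity)
  rw [gaussianReal_of_var_ne_zero _ hv, integrable_withDensity_iff_integrable_smul'
    (measurable_gaussianPDF _ _) (ae_of_all _ fun _ ↦ gaussianPDF_lt_top)]
  simp_rw [toReal_gaussianPDF, smul_eq_mul, gaussianPDFReal_zero_mul_exp_mul_sq]
  exact (integrable_exp_neg_mul_sq hb).const_mul _

lemma integral_exp_mul_sq_gaussianReal {v : ℝ≥0} {u : ℝ} (h : 2 * u * v < 1) :
    ∫ x, exp (u * x ^ 2) ∂gaussianReal 0 v = (√(1 - 2 * u * v))⁻¹ := by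
  rcases eq_or_ne v 0 with rfl | hv
  · simp
  have hv' : 0 < (v : ℝ) := by positivity
  rw [integral_gaussianReal_eq_integral_smul hv]
  simp_rw [smul_eq_mul, gaussianPDFReal_zero_mul_exp_mul_sq]
  rw [integral_const_mul, integral_gaussian, inv_two_mul_sub_eq_div hv'.ne', div_div_eq_mul_div,
    mul_right_comm, sqrt_div' _ (by linarith)]
  field_simp

namespace ProbabilityTheory.HasLaw

variable {Ω : Type*} [MeasurableSpace Ω] {μ : Measure Ω} {X : Ω → ℝ} {v : ℝ≥0} {u : ℝ}

lemma integrable_exp_mul_sq (hX : HasLaw X (gaussianReal 0 v) μ) (h : 2 * u * v < 1) :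
    Integrable (fun ω ↦ exp (u * X ω ^ 2)) μ := by
  refine (integrable_map_measure (g := fun x ↦ exp (u * x ^ 2)) (by fun_prop)
    hX.aemeasurable).mp ?_
  rw [hX.map_eq]
  exact integrable_exp_mul_sq_gaussianReal h

lemma integral_exp_mul_sq (hX : HasLaw X (gaussianReal 0 v) μ) (h : 2 * u * v < 1) :
    ∫ ω, exp (u * X ω ^ 2) ∂μ = (√(1 - 2 * u * v))⁻¹ := by
  rw [← integral_exp_mul_sq_gaussianReal h]
  exact hX.integral_comp (f := fun x ↦ exp (u * x ^ 2)) (by fun_prop)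

end ProbabilityTheory.HasLaw

lemma exp_mul_norm_sq (u : ℝ) (w : ℂ) :
    exp (u * ‖w‖ ^ 2) = exp (u * w.re ^ 2) * exp (u * w.im ^ 2) := by
  rw [← exp_add, Complex.sq_norm, Complex.normSq_apply]
  ring_nf

namespace IsStdComplexGaussian

variable {Ω : Type*} [MeasurableSpace Ω] {μ : Measure Ω} {g : Ω → ℂ} {u : ℝ}

lemma hasLaw_re (hg : IsStdComplexGaussian μ g) :
    HasLaw (fun ω ↦ (g ω).re) (gaussianReal 0 (1 / 2)) μ :=
  ⟨(Complex.measurable_re.comp hg.1).aemeasurable, hg.2.1⟩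

lemma hasLaw_im (hg : IsStdComplexGaussian μ g) :
    HasLaw (fun ω ↦ (g ω).im) (gaussianReal 0 (1 / 2)) μ :=
  ⟨(Complex.measurable_im.comp hg.1).aemeasurable, hg.2.2.1⟩

lemma indepFun_exp_mul_sq_re_im (hg : IsStdComplexGaussian μ g) (u : ℝ) :
    IndepFun (fun ω ↦ exp (u * (g ω).re ^ 2)) (fun ω ↦ exp (u * (g ω).im ^ 2)) μ :=
  hg.2.2.2.comp (φ := fun x ↦ exp (u * x ^ 2)) (ψ := fun x ↦ exp (u * x ^ 2))
    (by fun_prop) (by fun_prop)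

lemma integrable_exp_mul_norm_sq (hg : IsStdComplexGaussian μ g) (hu : u < 1) :
    Integrable (fun ω ↦ exp (u * ‖g ω‖ ^ 2)) μ := by
  simp_rw [exp_mul_norm_sq]
  exact (hg.indepFun_exp_mul_sq_re_im u).integrable_mul
    (hg.hasLaw_re.integrable_exp_mul_sq (by push_cast; linarith))
    (hg.hasLaw_im.integrable_exp_mul_sq (by push_cast; linarith))

lemma mgf_norm_sq (hg : IsStdComplexGaussian μ g) (hu : u < 1) :
    mgf (fun ω ↦ ‖g ω‖ ^ 2) μ u = (1 - u)⁻¹ := by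
  have hu' : 2 * u * ((1 / 2 : ℝ≥0) : ℝ) < 1 := by push_cast; linarith
  calc mgf (fun ω ↦ ‖g ω‖ ^ 2) μ u
      = ∫ ω, exp (u * (g ω).re ^ 2) * exp (u * (g ω).im ^ 2) ∂μ := by
        simp_rw [mgf, exp_mul_norm_sq]
    _ = (∫ ω, exp (u * (g ω).re ^ 2) ∂μ) * ∫ ω, exp (u * (g ω).im ^ 2) ∂μ :=
        (hg.indepFun_exp_mul_sq_re_im u).integral_fun_mul_eq_mul_integral
          (by have := hg.1; fun_prop) (by have := hg.1; fun_prop)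
    _ = (1 - u)⁻¹ := by
        rw [hg.hasLaw_re.integral_exp_mul_sq hu', hg.hasLaw_im.integral_exp_mul_sq hu', ← mul_inv,
          mul_self_sqrt (by push_cast; linarith)]
        push_cast
        ring

end IsStdComplexGaussian

section

variable {Ω ι : Type*} [MeasurableSpace Ω] {μ : Measure Ω}

theorem measureReal_sum_ge_le_of_iIndepFun_of_mgf_le {X : ι → Ω → ℝ} (hindep : iIndepFun X μ)
    (hmeas : ∀ i, Measurable (X i)) {s : Finset ι} {t : ℝ} (ht : 0 ≤ t)
    (hint : ∀ i ∈ s, Integrable (fun ω ↦ exp (t * X i ω)) μ) {b : ι → ℝ}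
    (hb : ∀ i ∈ s, mgf (X i) μ t ≤ exp (b i)) (r : ℝ) :
    μ.real {ω | r ≤ ∑ i ∈ s, X i ω} ≤ exp (-t * r + ∑ i ∈ s, b i) := by
  have := hindep.isProbabilityMeasure
  have hchernoff := measure_ge_le_exp_mul_mgf r ht (hindep.integrable_exp_mul_sum hmeas hint)
  simp only [Finset.sum_apply] at hchernoff
  calc μ.real {ω | r ≤ ∑ i ∈ s, X i ω}
      ≤ exp (-t * r) * ∏ i ∈ s, mgf (X i) μ t := by rwa [← hindep.mgf_sum hmeas]
    _ ≤ exp (-t * r) * ∏ i ∈ s, exp (b i) := by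
        gcongr with i hi
        · exact fun i _ ↦ mgf_nonneg
        · exact hb i hi
    _ = exp (-t * r + ∑ i ∈ s, b i) := by rw [← exp_sum, ← exp_add]

lemma measure_lt_tsum_subtype_le {f : ℕ → Ω → ℝ} {N : ℕ} (hf : ∀ n, N ≤ n → ∀ ω, 0 ≤ f n ω)
    {r : ℝ} {B : ℝ≥0∞} (hB : ∀ M, μ {ω | r < ∑ n ∈ Ico N M, f n ω} ≤ B) :
    μ {ω | r < ∑' n : {n : ℕ // N ≤ n}, f n ω} ≤ B := by
  have hsub : {ω | r < ∑' n : {n : ℕ // N ≤ n}, f n ω} ⊆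
      ⋃ M, {ω | r < ∑ n ∈ Ico N M, f n ω} := by
    intro ω (hω : r < _)
    by_contra! hle
    simp only [Set.mem_iUnion, Set.mem_ofPred_eq, not_exists, not_lt] at hle
    refine hω.not_ge ?_
    refine (tsum_subtype {n | N ≤ n} (f · ω)).trans_le ?_
    refine tsum_le_of_sum_range_le (fun n ↦ ?_) (fun M ↦ ?_)
    · by_cases hn : N ≤ n <;> simp [hn, hf n]
    · refine Eq.trans_le ?_ (hle M)
      rw [sum_indicator_eq_sum_filter]
      congr 1
      ext n
      simp [and_comm]
  have hmono : Monotone fun M ↦ {ω | r < ∑ n ∈ Ico N M, f n ω} := by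
    intro M M' hM ω (hω : r < _)
    refine hω.trans_le (sum_le_sum_of_subset_of_nonneg (Ico_subset_Ico_right hM) ?_)
    exact fun n hn _ ↦ hf n (mem_Ico.mp hn).1 ω
  calc μ {ω | r < ∑' n : {n : ℕ // N ≤ n}, f n ω} ≤ μ (⋃ M, {ω | r < ∑ n ∈ Ico N M, f n ω}) :=
        measure_mono hsub
    _ ≤ B := by rw [hmono.measure_iUnion]; exact iSup_le hB

theorem measureReal_sum_mul_norm_sq_ge_le {g : ι → Ω → ℂ} (hindep : iIndepFun g μ)
    (hgauss : ∀ i, IsStdComplexGaussian μ (g i)) {s : Finset ι} {a : ι → ℝ} {t : ℝ} (ht : 0 ≤ t)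
    (ha : ∀ i ∈ s, 0 ≤ a i) (hta : ∀ i ∈ s, a i * t ≤ 1 / 2) (r : ℝ) :
    μ.real {ω | r ≤ ∑ i ∈ s, a i * ‖g i ω‖ ^ 2} ≤ exp (-t * r + 2 * t * ∑ i ∈ s, a i) := by
  have hmeas : ∀ i, Measurable fun ω ↦ a i * ‖g i ω‖ ^ 2 := fun i ↦ by
    have := (hgauss i).1; fun_prop
  have hindep' : iIndepFun (fun i ω ↦ a i * ‖g i ω‖ ^ 2) μ :=
    hindep.comp (fun i w ↦ a i * ‖w‖ ^ 2) (fun i ↦ by fun_prop)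
  have hmul : 2 * t * ∑ i ∈ s, a i = ∑ i ∈ s, 2 * (a i * t) := by
    rw [mul_sum]; exact sum_congr rfl fun i _ ↦ by ring
  rw [hmul]
  refine measureReal_sum_ge_le_of_iIndepFun_of_mgf_le hindep' hmeas ht (fun i hi ↦ ?_)
    (fun i hi ↦ ?_) r
  · simp_rw [← mul_assoc, mul_comm t]
    exact (hgauss i).integrable_exp_mul_norm_sq (by linarith [hta i hi])
  · rw [mgf_const_mul, (hgauss i).mgf_norm_sq (by linarith [hta i hi])]
    exact inv_one_sub_le_exp_two_mul (mul_nonneg (ha i hi) ht) (hta i hi)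

theorem measure_lt_tsum_mul_norm_sq_le {g : ℕ → Ω → ℂ} (hindep : iIndepFun g μ)
    (hgauss : ∀ n, IsStdComplexGaussian μ (g n)) {a : ℕ → ℝ} {N : ℕ} {t B : ℝ} (ht : 0 ≤ t)
    (ha : ∀ n, N ≤ n → 0 ≤ a n) (hta : ∀ n, N ≤ n → a n * t ≤ 1 / 2)
    (hB : ∀ M, 2 * t * ∑ n ∈ Ico N M, a n ≤ B) (r : ℝ) :
    μ {ω | r < ∑' n : {n : ℕ // N ≤ n}, a n * ‖g n ω‖ ^ 2} ≤ ENNReal.ofReal (exp (-t * r + B)) := by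
  have := hindep.isProbabilityMeasure
  refine measure_lt_tsum_subtype_le (f := fun n ω ↦ a n * ‖g n ω‖ ^ 2)
    (fun n hn ω ↦ mul_nonneg (ha n hn) (sq_nonneg _)) fun M ↦ ?_
  calc μ {ω | r < ∑ n ∈ Ico N M, a n * ‖g n ω‖ ^ 2}
      ≤ μ {ω | r ≤ ∑ n ∈ Ico N M, a n * ‖g n ω‖ ^ 2} :=
        measure_mono (Set.ofPred_subset_ofPred.mpr fun ω h ↦ h.le)
    _ = ENNReal.ofReal (μ.real {ω | r ≤ ∑ n ∈ Ico N M, a n * ‖g n ω‖ ^ 2}) :=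
        (ofReal_measureReal (measure_ne_top _ _)).symm
    _ ≤ ENNReal.ofReal (exp (-t * r + B)) := by
        refine ENNReal.ofReal_le_ofReal ((measureReal_sum_mul_norm_sq_ge_le hindep hgauss ht
          (fun n hn ↦ ha n (mem_Ico.mp hn).1) (fun n hn ↦ hta n (mem_Ico.mp hn).1) r).trans ?_)
        gcongr
        exact hB M

end

section Weights

variable {c₀ q : ℝ} {z : ℕ → ℝ} {N n : ℕ}

lemma inv_rpow_le_of_forall_mul_le (hc₀ : 0 < c₀) (hq : 0 ≤ q) (hz : ∀ n : ℕ, 1 ≤ n → c₀ * n ≤ z n)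
    (hn : 1 ≤ n) : (z n ^ (q + 1))⁻¹ ≤ (c₀ ^ (q + 1))⁻¹ * (n : ℝ) ^ (-(q + 1)) :=
  inv_rpow_le_of_mul_le hc₀ (by exact_mod_cast hn) (hz n hn) (by linarith)

lemma inv_rpow_nonneg_of_forall_mul_le (hc₀ : 0 < c₀) (hz : ∀ n : ℕ, 1 ≤ n → c₀ * n ≤ z n)
    (hn : 1 ≤ n) : 0 ≤ (z n ^ (q + 1))⁻¹ :=
  inv_nonneg.mpr (rpow_nonneg ((mul_nonneg hc₀.le n.cast_nonneg).trans (hz n hn)) _)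

lemma inv_rpow_mul_le_half (hc₀ : 0 < c₀) (hq : 0 ≤ q) (hz : ∀ n : ℕ, 1 ≤ n → c₀ * n ≤ z n)
    (hN : 1 ≤ N) (hn : N ≤ n) : (z n ^ (q + 1))⁻¹ * (c₀ ^ (q + 1) / 2 * N ^ q) ≤ 1 / 2 := by
  have hN' : (1 : ℝ) ≤ N := by exact_mod_cast hN
  have hpow : (N : ℝ) ^ (-(q + 1)) * (N : ℝ) ^ q = (N : ℝ)⁻¹ := by
    rw [← rpow_add (by positivity), show -(q + 1) + q = -1 by ring, rpow_neg_one]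
  calc (z n ^ (q + 1))⁻¹ * (c₀ ^ (q + 1) / 2 * N ^ q)
      ≤ (c₀ ^ (q + 1))⁻¹ * (n : ℝ) ^ (-(q + 1)) * (c₀ ^ (q + 1) / 2 * N ^ q) := by
        gcongr
        exact inv_rpow_le_of_forall_mul_le hc₀ hq hz (hN.trans hn)
    _ ≤ (c₀ ^ (q + 1))⁻¹ * (N : ℝ) ^ (-(q + 1)) * (c₀ ^ (q + 1) / 2 * N ^ q) := by
        gcongr ?_ * _
        exact mul_le_mul_of_nonneg_left
          (rpow_le_rpow_of_nonpos (by positivity) (by exact_mod_cast hn) (by linarith))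
          (by positivity)
    _ = (N : ℝ)⁻¹ / 2 := by
        rw [← hpow]
        field_simp
    _ ≤ 1 / 2 := by gcongr; exact inv_le_one_of_one_le₀ hN'

lemma two_mul_sum_Ico_inv_rpow_le (hc₀ : 0 < c₀) (hq : 0 < q)
    (hz : ∀ n : ℕ, 1 ≤ n → c₀ * n ≤ z n) (hN : 1 ≤ N) (M : ℕ) :
    2 * (c₀ ^ (q + 1) / 2 * N ^ q) * ∑ n ∈ Ico N M, (z n ^ (q + 1))⁻¹ ≤ 2 ^ (q + 1) / q := by
  have hpow : (N : ℝ) ^ q * (N : ℝ) ^ (-q) = 1 := by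
    rw [← rpow_add (by positivity), add_neg_cancel, rpow_zero]
  calc 2 * (c₀ ^ (q + 1) / 2 * N ^ q) * ∑ n ∈ Ico N M, (z n ^ (q + 1))⁻¹
      ≤ 2 * (c₀ ^ (q + 1) / 2 * N ^ q) *
          ((c₀ ^ (q + 1))⁻¹ * ∑ n ∈ Ico N M, (n : ℝ) ^ (-(q + 1))) := by
        gcongr 2 * _ * ?_
        rw [mul_sum]
        exact sum_le_sum fun n hn ↦
          inv_rpow_le_of_forall_mul_le hc₀ hq.le hz (hN.trans (mem_Ico.mp hn).1)
    _ ≤ 2 * (c₀ ^ (q + 1) / 2 * N ^ q) *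
          ((c₀ ^ (q + 1))⁻¹ * (2 ^ (q + 1) / q * (N : ℝ) ^ (-q))) := by
        gcongr
        exact sum_Ico_rpow_neg_le hq hN M
    _ = 2 ^ (q + 1) / q := by
        field_simp
        linear_combination hpow

end Weights

theorem high_frequency_tail_bound_general {Ω : Type*} [MeasurableSpace Ω] (μ : Measure Ω)
    (c₀ : ℝ) (hc₀ : 0 < c₀) (z : ℕ → ℝ)
    (hz : ∀ n : ℕ, 1 ≤ n → c₀ * n ≤ z n) (g : ℕ → Ω → ℂ)
    (hindep : iIndepFun g μ)
    (hgauss : ∀ n, IsStdComplexGaussian μ (g n)) (s : ℝ)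
    (hs : s < 1 / 2) :
    ∃ c > (0 : ℝ), ∃ C > (0 : ℝ), ∀ N₀ : ℕ, 2 ≤ N₀ → ∀ lam : ℝ, 0 < lam →
      μ {ω | lam < (N₀ : ℝ) ^ ((1 : ℝ) / 2 - s) *
          Real.sqrt (∑' n : {n : ℕ // N₀ ≤ n}, ‖g n ω‖ ^ 2 / z n ^ (2 * (1 - s)))}
        ≤ ENNReal.ofReal (C * Real.exp (-(lam ^ (c : ℝ)))) := by
  set q := 1 - 2 * s with hq_def
  have hq : 0 < q := by linarith
  set t₀ := c₀ ^ (q + 1) / 2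
  have ht₀ : 0 < t₀ := by positivity
  refine ⟨1, one_pos, exp (2 ^ (q + 1) / q + (4 * t₀)⁻¹), exp_pos _, fun N₀ hN₀ lam hlam ↦ ?_⟩
  have hN₀ : 1 ≤ N₀ := by omega
  have hevent : ∀ ω, lam < (N₀ : ℝ) ^ ((1 : ℝ) / 2 - s) *
      √(∑' n : {n : ℕ // N₀ ≤ n}, ‖g n ω‖ ^ 2 / z n ^ (2 * (1 - s))) ↔
      lam ^ 2 / N₀ ^ q < ∑' n : {n : ℕ // N₀ ≤ n}, (z n ^ (q + 1))⁻¹ * ‖g n ω‖ ^ 2 := by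
    intro ω
    rw [lt_rpow_mul_sqrt_iff (by positivity) hlam.le, ← hq_def, show 2 * (1 - s) = q + 1 by ring]
    simp_rw [div_eq_inv_mul (‖_‖ ^ 2)]
  have htr : t₀ * N₀ ^ q * (lam ^ 2 / N₀ ^ q) = t₀ * lam ^ 2 := by
    field_simp [(rpow_pos_of_pos (by positivity : (0 : ℝ) < N₀) q).ne']
  simp_rw [hevent]
  refine (measure_lt_tsum_mul_norm_sq_le hindep hgauss (by positivity)
    (fun n hn ↦ inv_rpow_nonneg_of_forall_mul_le hc₀ hz (hN₀.trans hn))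
    (fun n hn ↦ inv_rpow_mul_le_half hc₀ hq.le hz hN₀ hn)
    (two_mul_sum_Ico_inv_rpow_le hc₀ hq hz hN₀) _).trans (ENNReal.ofReal_le_ofReal ?_)
  rw [rpow_one, ← exp_add, neg_mul, htr, exp_le_exp]
  linarith [le_mul_sq_add_inv_four_mul ht₀ lam]

/-- Lemma 3.1: tail bound for the `H^s` norm of the high-frequency part of the random
data, `μ_F({φ : N₀^{1/2−s} ‖P_{≥N₀}φ‖_{H^s} > λ}) ≲ exp(−λ^c)`. -/
theorem high_frequency_tail_bound {Ω : Type*} [MeasurableSpace Ω] (μ : Measure Ω)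
    [IsProbabilityMeasure μ] (c₀ : ℝ) (hc₀ : 0 < c₀) (z : ℕ → ℝ)
    (hz : ∀ n : ℕ, 1 ≤ n → c₀ * n ≤ z n) (g : ℕ → Ω → ℂ)
    (hindep : iIndepFun g μ)
    (hgauss : ∀ n, IsStdComplexGaussian μ (g n)) (s : ℝ) (hs0 : 0 ≤ s)
    (hs : s < 1 / 2) :
    ∃ c > (0 : ℝ), ∃ C > (0 : ℝ), ∀ N₀ : ℕ, 2 ≤ N₀ → ∀ lam : ℝ, 0 < lam →
      μ {ω | lam < (N₀ : ℝ) ^ ((1 : ℝ) / 2 - s) *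
          Real.sqrt (∑' n : {n : ℕ // N₀ ≤ n}, ‖g n ω‖ ^ 2 / z n ^ (2 * (1 - s)))}
        ≤ ENNReal.ofReal (C * Real.exp (-(lam ^ (c : ℝ)))) :=
  high_frequency_tail_bound_general μ c₀ hc₀ z hz g hindep hgauss s hs
end

section
/- Let C₁ > 0 and let (z_n)_{n≥1} be a sequence of real numbers satisfying |z_n − π(n − 1/4)| ≤ C₁/n for all n ≥ 1. Then there exists a constant C > 0 (depending only on C₁) such that for every integer M ≥ 1 and every choice of complex numbers (a_n)_{M ≤ n < 2M}, ∫₀¹ |∑_{M ≤ n < 2M} a_n e^{2π i z_n r}|⁴ dr ≤ C · M · (∑_{M ≤ n < 2M} |a_n|²)². -/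
/-!
Replacing `zₙ` by the model frequencies `π(n - 1/4)` moves each phase on `[0, 1]` by at most
`2πC₁/M`, so the sum moves pointwise by at most `2πC₁/M · ∑ |aₙ| ≤ 2πC₁ M^{-1/2} (∑ |aₙ|²)^{1/2}`,
which costs `O(M (∑ |aₙ|²)²)` in the fourth moment. For the model sum the shift `-1/4` is a
unimodular factor, and the square of `∑ aₙ e^{2πi πn r}` is `∑ b_s e^{2πi s (πr)}` with
`b_s = ∑_{n+m=s} aₙ aₘ`. Substituting `u = πr`, enlarging `[0, π]` to `[0, 4]` and using
`1`-periodicity, Parseval gives `∫₀¹ |model|⁴ ≤ (4/π) ∑ |b_s|²`; Cauchy–Schwarz over the at most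
`M` representations `s = n + m` gives `∑ |b_s|² ≤ M (∑ |aₙ|²)²`.
-/

open Real Finset
open Complex (I)
open scoped Pointwise ComplexConjugate

noncomputable def expSum (P : Finset ℕ) (a : ℕ → ℂ) (ω : ℕ → ℝ) (r : ℝ) : ℂ :=
  ∑ n ∈ P, a n * Complex.exp (((2 * π * ω n * r : ℝ) : ℂ) * I)

def selfConv (P : Finset ℕ) (a : ℕ → ℂ) (s : ℕ) : ℂ :=
  ∑ p ∈ P ×ˢ P with p.1 + p.2 = s, a p.1 * a p.2

lemma norm_exp_ofReal_mul_I_sub_exp_ofReal_mul_I_le (x y : ℝ) :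
    ‖Complex.exp (x * I) - Complex.exp (y * I)‖ ≤ |x - y| := by
  have : Complex.exp (x * I) - Complex.exp (y * I)
      = Complex.exp (y * I) * (Complex.exp (I * ((x - y : ℝ) : ℂ)) - 1) := by
    rw [mul_sub, ← Complex.exp_add, mul_one]; push_cast; ring_nf
  rw [this, norm_mul, Complex.norm_exp_ofReal_mul_I, one_mul]
  exact Real.norm_exp_I_mul_ofReal_sub_one_le

lemma integral_exp_two_pi_int_mul_I (k : ℤ) :
    ∫ u in (0 : ℝ)..1, Complex.exp (((2 * π * k * u : ℝ) : ℂ) * I) = if k = 0 then 1 else 0 := by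
  have h := fourierCoeff_eq_intervalIntegral (T := 1) (fourier k) 0 0
  simp only [fourierCoeff_fourier, neg_zero, zero_add, fourier_coe_apply, Int.cast_zero, mul_zero,
    zero_mul, Complex.ofReal_one, div_one, Complex.exp_zero, one_smul] at h
  convert h.symm using 1
  · congr 1 with u; push_cast; ring_nf
  · simp [Pi.single_apply, eq_comm]

lemma continuous_expSum (P : Finset ℕ) (a : ℕ → ℂ) (ω : ℕ → ℝ) : Continuous (expSum P a ω) := by
  unfold expSum; fun_prop

variable {P : Finset ℕ} {a : ℕ → ℂ}

lemma expSum_add_const (ω : ℕ → ℝ) (c r : ℝ) :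
    expSum P a (fun n => ω n + c) r
      = Complex.exp (((2 * π * c * r : ℝ) : ℂ) * I) * expSum P a ω r := by
  simp only [expSum, mul_sum]
  refine sum_congr rfl fun n _ => ?_
  rw [mul_left_comm, ← Complex.exp_add]
  push_cast; ring_nf

lemma norm_expSum_add_const (ω : ℕ → ℝ) (c r : ℝ) :
    ‖expSum P a (fun n => ω n + c) r‖ = ‖expSum P a ω r‖ := by
  rw [expSum_add_const, norm_mul, Complex.norm_exp_ofReal_mul_I, one_mul]

lemma expSum_mul_natCast (c r : ℝ) :
    expSum P a (fun n => c * n) r = expSum P a Nat.cast (c * r) := by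
  refine sum_congr rfl fun n _ => ?_
  rw [show 2 * π * (c * n) * r = 2 * π * n * (c * r) by ring]

lemma expSum_natCast_add_one (u : ℝ) :
    expSum P a Nat.cast (u + 1) = expSum P a Nat.cast u := by
  refine sum_congr rfl fun n _ => ?_
  rw [show (((2 * π * n * (u + 1) : ℝ) : ℂ) * I)
      = ((2 * π * n * u : ℝ) : ℂ) * I + n * (2 * π * I) by push_cast; ring,
    Complex.exp_add, Complex.exp_nat_mul_two_pi_mul_I, mul_one]

lemma sq_expSum_mul_natCast (c r : ℝ) :
    expSum P a (fun n => c * n) r ^ 2 = expSum (P + P) (selfConv P a) (fun s => c * s) r := by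
  have hmaps : ∀ p ∈ P ×ˢ P, p.1 + p.2 ∈ P + P := fun p hp =>
    add_mem_add (mem_product.1 hp).1 (mem_product.1 hp).2
  rw [expSum, sq, sum_mul_sum, ← sum_product', ← sum_fiberwise_of_maps_to hmaps]
  simp only [expSum, selfConv, sum_mul]
  refine sum_congr rfl fun s _ => sum_congr rfl fun p hp => ?_
  rw [← (mem_filter.1 hp).2, mul_mul_mul_comm, ← Complex.exp_add]
  push_cast; ring_nf

lemma integral_norm_sq_expSum_natCast :
    ∫ u in (0 : ℝ)..1, ‖expSum P a Nat.cast u‖ ^ 2 = ∑ n ∈ P, ‖a n‖ ^ 2 := by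
  have hexpand (u : ℝ) : ((‖expSum P a Nat.cast u‖ ^ 2 : ℝ) : ℂ) = ∑ s ∈ P, ∑ t ∈ P,
      a s * conj (a t) * Complex.exp (((2 * π * ((s - t : ℤ) : ℝ) * u : ℝ) : ℂ) * I) := by
    rw [Complex.ofReal_pow, ← Complex.mul_conj', expSum, map_sum, sum_mul_sum]
    refine sum_congr rfl fun s _ => sum_congr rfl fun t _ => ?_
    rw [map_mul, ← Complex.exp_conj, map_mul, Complex.conj_ofReal, Complex.conj_I,
      mul_mul_mul_comm, ← Complex.exp_add]
    push_cast; ring_nf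
  apply Complex.ofReal_injective
  rw [← intervalIntegral.integral_ofReal]
  simp_rw [hexpand]
  have hint (c : ℂ) (k : ℤ) : IntervalIntegrable
      (fun u : ℝ => c * Complex.exp (((2 * π * k * u : ℝ) : ℂ) * I)) MeasureTheory.volume 0 1 :=
    (by fun_prop : Continuous _).intervalIntegrable _ _
  rw [intervalIntegral.integral_finsetSum fun s _ =>
    (by fun_prop : Continuous _).intervalIntegrable _ _]
  simp_rw [intervalIntegral.integral_finsetSum fun t _ => hint _ _,
    intervalIntegral.integral_const_mul, integral_exp_two_pi_int_mul_I]
  simp [sub_eq_zero, Complex.mul_conj']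

lemma integral_norm_sq_expSum_mul_natCast_le {c : ℝ} {N : ℕ}
    (hc : 0 < c) (hcN : c ≤ N) :
    ∫ r in (0 : ℝ)..1, ‖expSum P a (fun n => c * n) r‖ ^ 2 ≤ N / c * ∑ n ∈ P, ‖a n‖ ^ 2 := by
  set f : ℝ → ℝ := fun u => ‖expSum P a Nat.cast u‖ ^ 2
  have hf : Continuous f := (continuous_expSum P a Nat.cast).norm.pow 2
  have hper : Function.Periodic f 1 := fun u => by simp only [f, expSum_natCast_add_one]
  calc ∫ r in (0 : ℝ)..1, ‖expSum P a (fun n => c * n) r‖ ^ 2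
      = c⁻¹ * ∫ u in (0 : ℝ)..c, f u := by
        simp_rw [expSum_mul_natCast]
        rw [intervalIntegral.integral_comp_mul_left f hc.ne']
        simp
    _ ≤ c⁻¹ * ∫ u in (0 : ℝ)..N, f u := by
        gcongr
        exact intervalIntegral.integral_mono_interval le_rfl hc.le hcN
          (Filter.Eventually.of_forall fun u => by positivity) (hf.intervalIntegrable _ _)
    _ = c⁻¹ * (N * ∫ u in (0 : ℝ)..1, f u) := by
        simpa using congrArg (c⁻¹ * ·)
          (hper.intervalIntegral_add_zsmul_eq N 0 fun _ _ => hf.intervalIntegrable _ _)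
    _ = N / c * ∑ n ∈ P, ‖a n‖ ^ 2 := by
        rw [integral_norm_sq_expSum_natCast]; ring

lemma sum_norm_sq_selfConv_le :
    ∑ s ∈ P + P, ‖selfConv P a s‖ ^ 2 ≤ #P * (∑ n ∈ P, ‖a n‖ ^ 2) ^ 2 := by
  have hmaps : ∀ p ∈ P ×ˢ P, p.1 + p.2 ∈ P + P := fun p hp =>
    add_mem_add (mem_product.1 hp).1 (mem_product.1 hp).2
  have hfiber (s : ℕ) : ‖selfConv P a s‖ ^ 2
      ≤ #P * ∑ p ∈ P ×ˢ P with p.1 + p.2 = s, (‖a p.1‖ * ‖a p.2‖) ^ 2 := by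
    have hcard : #{p ∈ P ×ˢ P | p.1 + p.2 = s} ≤ #P :=
      card_le_card_of_injOn Prod.fst (fun p hp => (mem_product.1 (mem_filter.1 hp).1).1)
        fun p hp q hq hpq => by
          simp only [coe_filter, Set.mem_ofPred_eq] at hp hq
          exact Prod.ext hpq (by omega)
    calc ‖selfConv P a s‖ ^ 2
        ≤ (∑ p ∈ P ×ˢ P with p.1 + p.2 = s, ‖a p.1‖ * ‖a p.2‖) ^ 2 := by
          gcongr
          exact (norm_sum_le _ _).trans_eq (sum_congr rfl fun p _ => norm_mul _ _)
      _ ≤ #{p ∈ P ×ˢ P | p.1 + p.2 = s}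
            * ∑ p ∈ P ×ˢ P with p.1 + p.2 = s, (‖a p.1‖ * ‖a p.2‖) ^ 2 :=
          sq_sum_le_card_mul_sum_sq
      _ ≤ _ := by gcongr
  calc ∑ s ∈ P + P, ‖selfConv P a s‖ ^ 2
      ≤ ∑ s ∈ P + P, #P * ∑ p ∈ P ×ˢ P with p.1 + p.2 = s, (‖a p.1‖ * ‖a p.2‖) ^ 2 :=
        sum_le_sum fun s _ => hfiber s
    _ = #P * (∑ n ∈ P, ‖a n‖ ^ 2) ^ 2 := by
        rw [← mul_sum, sum_fiberwise_of_maps_to hmaps, sq (∑ n ∈ P, _), sum_mul_sum, sum_product]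
        simp_rw [mul_pow]

lemma integral_norm_pow_four_expSum_mul_natCast_le {c : ℝ} {N : ℕ}
    (hc : 0 < c) (hcN : c ≤ N) :
    ∫ r in (0 : ℝ)..1, ‖expSum P a (fun n => c * n) r‖ ^ 4
      ≤ N / c * #P * (∑ n ∈ P, ‖a n‖ ^ 2) ^ 2 := by
  have hsq (r : ℝ) : ‖expSum P a (fun n => c * n) r‖ ^ 4
      = ‖expSum (P + P) (selfConv P a) (fun s => c * s) r‖ ^ 2 := by
    rw [← sq_expSum_mul_natCast, norm_pow]; ring
  simp_rw [hsq]
  calc _ ≤ N / c * ∑ s ∈ P + P, ‖selfConv P a s‖ ^ 2 :=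
        integral_norm_sq_expSum_mul_natCast_le hc hcN
    _ ≤ N / c * (#P * (∑ n ∈ P, ‖a n‖ ^ 2) ^ 2) := by
        gcongr; exact sum_norm_sq_selfConv_le
    _ = _ := by ring

lemma norm_expSum_sub_expSum_le {ω ω' : ℕ → ℝ} {ε r : ℝ} (hω : ∀ n ∈ P, |ω n - ω' n| ≤ ε)
    (hr : |r| ≤ 1) :
    ‖expSum P a ω r - expSum P a ω' r‖ ≤ 2 * π * ε * ∑ n ∈ P, ‖a n‖ := by
  rw [expSum, expSum, ← sum_sub_distrib, mul_sum]
  refine (norm_sum_le _ _).trans (sum_le_sum fun n hn => ?_)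
  rw [← mul_sub, norm_mul, mul_comm]
  gcongr
  calc _ ≤ |2 * π * ω n * r - 2 * π * ω' n * r| :=
        norm_exp_ofReal_mul_I_sub_exp_ofReal_mul_I_le _ _
    _ = |2 * π * ((ω n - ω' n) * r)| := by ring_nf
    _ = 2 * π * (|ω n - ω' n| * |r|) := by
        rw [abs_mul (2 * π), abs_mul (ω n - ω' n), abs_of_pos two_pi_pos]
    _ ≤ 2 * π * (ε * 1) := by gcongr; exacts [(abs_nonneg _).trans (hω n hn), hω n hn]
    _ = 2 * π * ε := by ring

lemma integral_norm_pow_four_expSum_le_of_abs_sub_le {ω ω' : ℕ → ℝ} {ε : ℝ}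
    (hω : ∀ n ∈ P, |ω n - ω' n| ≤ ε) :
    ∫ r in (0 : ℝ)..1, ‖expSum P a ω r‖ ^ 4
      ≤ 8 * (∫ r in (0 : ℝ)..1, ‖expSum P a ω' r‖ ^ 4)
        + 8 * (2 * π * ε) ^ 4 * #P ^ 2 * (∑ n ∈ P, ‖a n‖ ^ 2) ^ 2 := by
  set δ := 2 * π * ε * ∑ n ∈ P, ‖a n‖
  have hpointwise : ∀ r ∈ Set.Icc (0 : ℝ) 1,
      ‖expSum P a ω r‖ ^ 4 ≤ 8 * ‖expSum P a ω' r‖ ^ 4 + 8 * δ ^ 4 := fun r hr => by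
    have hdiff := norm_expSum_sub_expSum_le (a := a) hω (abs_le.2 ⟨by linarith [hr.1], hr.2⟩)
    calc ‖expSum P a ω r‖ ^ 4 ≤ (‖expSum P a ω' r‖ + δ) ^ 4 := by
          gcongr; exact (norm_le_norm_add_norm_sub' _ _).trans (add_le_add le_rfl hdiff)
      _ ≤ 2 ^ 3 * (‖expSum P a ω' r‖ ^ 4 + δ ^ 4) := (even_two_mul 2).add_pow_le
      _ = _ := by ring
  have hcont (ω : ℕ → ℝ) : Continuous fun r => ‖expSum P a ω r‖ ^ 4 :=
    (continuous_expSum P a ω).norm.pow 4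
  have hmodel := ((hcont ω').const_mul 8).intervalIntegrable (μ := MeasureTheory.volume) 0 1
  have hδ : δ ^ 4 ≤ (2 * π * ε) ^ 4 * #P ^ 2 * (∑ n ∈ P, ‖a n‖ ^ 2) ^ 2 := by
    have hCS : (∑ n ∈ P, ‖a n‖) ^ 2 ≤ #P * ∑ n ∈ P, ‖a n‖ ^ 2 := sq_sum_le_card_mul_sum_sq
    calc δ ^ 4 = (2 * π * ε) ^ 4 * ((∑ n ∈ P, ‖a n‖) ^ 2) ^ 2 := by ring
      _ ≤ (2 * π * ε) ^ 4 * (#P * ∑ n ∈ P, ‖a n‖ ^ 2) ^ 2 := by gcongr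
      _ = _ := by ring
  calc ∫ r in (0 : ℝ)..1, ‖expSum P a ω r‖ ^ 4
      ≤ ∫ r in (0 : ℝ)..1, 8 * ‖expSum P a ω' r‖ ^ 4 + 8 * δ ^ 4 :=
        intervalIntegral.integral_mono_on zero_le_one ((hcont ω).intervalIntegrable _ _)
          (hmodel.add intervalIntegrable_const) hpointwise
    _ = 8 * (∫ r in (0 : ℝ)..1, ‖expSum P a ω' r‖ ^ 4) + 8 * δ ^ 4 := by
        rw [intervalIntegral.integral_add hmodel intervalIntegrable_const,
          intervalIntegral.integral_const_mul]
        simp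
    _ ≤ _ := by linarith

/-- The `L⁴` exponential-sum estimate with frequencies `z_n` satisfying the radial
Dirichlet eigenvalue asymptotics on the disc:
`∫₀¹ |∑_{M ≤ n < 2M} aₙ e^{2πi zₙ r}|⁴ dr ≤ C · M · (∑ |aₙ|²)²`. -/
theorem exponential_sum_L4_bound (C₁ : ℝ) (hC₁ : 0 < C₁) (z : ℕ → ℝ)
    (hz : ∀ n : ℕ, 1 ≤ n → |z n - π * (n - 1 / 4)| ≤ C₁ / n) :
    ∃ C > (0 : ℝ), ∀ M : ℕ, 1 ≤ M → ∀ a : ℕ → ℂ,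
      (∫ r in (0 : ℝ)..1,
          ‖∑ n ∈ Finset.Ico M (2 * M), a n * Complex.exp (((2 * π * z n * r : ℝ) : ℂ) * Complex.I)‖ ^ 4)
        ≤ C * M * (∑ n ∈ Finset.Ico M (2 * M), ‖a n‖ ^ 2) ^ 2 := by
  refine ⟨32 / π + 8 * (2 * π * C₁) ^ 4, by positivity, fun M hM a => ?_⟩
  set P := Finset.Ico M (2 * M)
  set A := ∑ n ∈ P, ‖a n‖ ^ 2
  have hM₁ : (1 : ℝ) ≤ M := by exact_mod_cast hM
  have hcard : #P = M := by simp [P, two_mul]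
  have hclose : ∀ n ∈ P, |z n - (π * n + -(π / 4))| ≤ C₁ / M := fun n hn => by
    have hMn : M ≤ n := (mem_Ico.1 hn).1
    calc |z n - (π * n + -(π / 4))| = |z n - π * (n - 1 / 4)| := by ring_nf
      _ ≤ C₁ / n := hz n (hM.trans hMn)
      _ ≤ C₁ / M := by gcongr
  have hmodel : ∫ r in (0 : ℝ)..1, ‖expSum P a (fun n => π * n + -(π / 4)) r‖ ^ 4
      ≤ 4 / π * M * A ^ 2 := by
    simp_rw [norm_expSum_add_const (fun n : ℕ => π * (n : ℝ)) (-(π / 4))]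
    simpa [hcard] using integral_norm_pow_four_expSum_mul_natCast_le (P := P) (a := a) (N := 4)
      pi_pos (by exact_mod_cast pi_le_four)
  have herror : (2 * π * (C₁ / M)) ^ 4 * M ^ 2 ≤ (2 * π * C₁) ^ 4 * M := by
    rw [show (2 * π * (C₁ / M)) ^ 4 * M ^ 2 = (2 * π * C₁) ^ 4 * M / M ^ 3 by field_simp]
    exact div_le_self (by positivity) (one_le_pow₀ hM₁)
  calc ∫ r in (0 : ℝ)..1, ‖expSum P a z r‖ ^ 4
      ≤ 8 * (∫ r in (0 : ℝ)..1, ‖expSum P a (fun n => π * n + -(π / 4)) r‖ ^ 4)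
        + 8 * (2 * π * (C₁ / M)) ^ 4 * #P ^ 2 * A ^ 2 :=
        integral_norm_pow_four_expSum_le_of_abs_sub_le hclose
    _ ≤ 8 * (4 / π * M * A ^ 2) + 8 * ((2 * π * C₁) ^ 4 * M) * A ^ 2 := by
        rw [hcard, mul_assoc 8 _ ((M : ℝ) ^ 2)]; gcongr
    _ = (32 / π + 8 * (2 * π * C₁) ^ 4) * M * A ^ 2 := by ring
end
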